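/- arXiv:1307.5709 — 5 statements merged into one kernel-verified Lean document; each statement's English description precedes it below -/
import Mathlib

section
/- Let X and Y be compact metric spaces and ω a finite Borel (Radon) measure on X. Let Φ be a set-valued map from X to Y that is continuous at every point of X, single-valued ω-a.e., and surjective (Φ(X) = Y). Then the set function M_Φ defined by M_Φ(E) = ω(Φ⁻¹(E)) is a Radon measure on Y: the collection of sets E ⊆ Y with Φ⁻¹(E) ω-measurable is a σ-algebra containing the Borel sets, Φ⁻¹(K) is compact in X for every compact K ⊆ Y, and M_Φ is countably additive on this σ-algebra. -/
/-! A closed set `F` has a closed preimage `Φ⁻¹(F)`: a limit of points `xₖ` with witnesses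
`yₖ ∈ Φ(xₖ) ∩ F` carries, by continuity of `Φ`, a subsequential limit of the `yₖ` in
`Φ(x₀) ∩ F`. Since `Φ` is single-valued almost everywhere, `Φ⁻¹(Eᶜ)` agrees with `Φ⁻¹(E)ᶜ` and
`Φ⁻¹(E) ∩ Φ⁻¹(E')` is null for disjoint `E, E'`; with `Φ⁻¹(⋃ Eᵢ) = ⋃ Φ⁻¹(Eᵢ)` this makes the
sets with null-measurable preimage a σ-algebra, containing the closed and hence all Borel sets,
on which `E ↦ ω(Φ⁻¹(E))` is countably additive. -/

open Filter MeasureTheory Topology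

/-- `Φ⁻¹(E) = {x : Φ(x) ∩ E ≠ ∅}` for a set-valued map `Φ`. -/
def SVPreimage {X Y : Type*} (Φ : X → Set Y) (E : Set Y) : Set X :=
  {x | (Φ x ∩ E).Nonempty}

/-- Continuity of a set-valued map at a point: whenever `xₖ → x₀` and `yₖ ∈ Φ(xₖ)`, some
subsequence of `yₖ` converges to a point of `Φ(x₀)`. -/
def SVContinuousAt {X Y : Type*} [TopologicalSpace X] [TopologicalSpace Y]
    (Φ : X → Set Y) (x₀ : X) : Prop :=
  ∀ (xk : ℕ → X) (yk : ℕ → Y), Tendsto xk atTop (nhds x₀) → (∀ k, yk k ∈ Φ (xk k)) →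
    ∃ (s : ℕ → ℕ) (y₀ : Y), StrictMono s ∧ y₀ ∈ Φ x₀ ∧ Tendsto (yk ∘ s) atTop (nhds y₀)

section SetValued

variable {X Y : Type*} (Φ : X → Set Y)

lemma svPreimage_empty : SVPreimage Φ (∅ : Set Y) = ∅ := by
  simp [SVPreimage]

lemma svPreimage_iUnion {ι : Sort*} (E : ι → Set Y) :
    SVPreimage Φ (⋃ i, E i) = ⋃ i, SVPreimage Φ (E i) := by
  ext x
  simp only [SVPreimage, Set.inter_iUnion, Set.nonempty_iUnion, Set.mem_ofPred_eq, Set.mem_iUnion]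

variable {Φ}

lemma svPreimage_inter_subset_not_singleton {E F : Set Y} (hEF : Disjoint E F) :
    SVPreimage Φ E ∩ SVPreimage Φ F ⊆ {x | ¬∃ y, Φ x = {y}} := by
  rintro x ⟨⟨y₁, hy₁Φ, hy₁E⟩, ⟨y₂, hy₂Φ, hy₂F⟩⟩ ⟨y, hy⟩
  rw [hy, Set.mem_singleton_iff] at hy₁Φ hy₂Φ
  subst hy₁Φ hy₂Φ
  exact hEF.le_bot ⟨hy₁E, hy₂F⟩

section Topology

variable [TopologicalSpace X] [TopologicalSpace Y]

lemma isSeqClosed_svPreimage (hcont : ∀ x, SVContinuousAt Φ x) {F : Set Y} (hF : IsClosed F) :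
    IsSeqClosed (SVPreimage Φ F) := by
  intro xk x hmem hlim
  choose yk hykΦ hykF using hmem
  obtain ⟨s, y₀, -, hy₀Φ, hy₀lim⟩ := hcont x xk yk hlim hykΦ
  exact ⟨y₀, hy₀Φ, hF.mem_of_tendsto hy₀lim (Eventually.of_forall fun n => hykF (s n))⟩

lemma isClosed_svPreimage [SequentialSpace X] (hcont : ∀ x, SVContinuousAt Φ x) {F : Set Y}
    (hF : IsClosed F) : IsClosed (SVPreimage Φ F) :=
  (isSeqClosed_svPreimage hcont hF).isClosed

lemma isCompact_svPreimage [SequentialSpace X] [CompactSpace X] [T2Space Y]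
    (hcont : ∀ x, SVContinuousAt Φ x) {K : Set Y} (hK : IsCompact K) :
    IsCompact (SVPreimage Φ K) :=
  (isClosed_svPreimage hcont hK.isClosed).isCompact

end Topology

section Measure

variable [MeasurableSpace X] {ω : Measure X}

lemma svPreimage_compl_ae_eq (hsv : ∀ᵐ x ∂ω, ∃ y, Φ x = {y}) (E : Set Y) :
    SVPreimage Φ Eᶜ =ᵐ[ω] (SVPreimage Φ E)ᶜ := by
  filter_upwards [hsv] with x ⟨y, hy⟩
  change (x ∈ SVPreimage Φ Eᶜ) = (x ∈ (SVPreimage Φ E)ᶜ)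
  simp [SVPreimage, hy]

lemma MeasureTheory.NullMeasurableSet.svPreimage_compl (hsv : ∀ᵐ x ∂ω, ∃ y, Φ x = {y}) {E : Set Y}
    (hE : NullMeasurableSet (SVPreimage Φ E) ω) : NullMeasurableSet (SVPreimage Φ Eᶜ) ω :=
  hE.compl.congr (svPreimage_compl_ae_eq hsv E).symm

lemma MeasureTheory.NullMeasurableSet.svPreimage_iUnion {ι : Sort*} [Countable ι] {E : ι → Set Y}
    (hE : ∀ i, NullMeasurableSet (SVPreimage Φ (E i)) ω) :
    NullMeasurableSet (SVPreimage Φ (⋃ i, E i)) ω := by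
  rw [_root_.svPreimage_iUnion]
  exact .iUnion hE

lemma aedisjoint_svPreimage (hsv : ∀ᵐ x ∂ω, ∃ y, Φ x = {y}) {E F : Set Y} (hEF : Disjoint E F) :
    AEDisjoint ω (SVPreimage Φ E) (SVPreimage Φ F) :=
  measure_mono_null (svPreimage_inter_subset_not_singleton hEF) (ae_iff.1 hsv)

lemma measure_svPreimage_iUnion {ι : Type*} [Countable ι] (hsv : ∀ᵐ x ∂ω, ∃ y, Φ x = {y})
    {E : ι → Set Y} (hE : ∀ i, NullMeasurableSet (SVPreimage Φ (E i)) ω)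
    (hdisj : Pairwise fun i j => Disjoint (E i) (E j)) :
    ω (SVPreimage Φ (⋃ i, E i)) = ∑' i, ω (SVPreimage Φ (E i)) := by
  rw [svPreimage_iUnion]
  exact measure_iUnion₀ (fun i j hij => aedisjoint_svPreimage hsv (hdisj hij)) hE

lemma nullMeasurableSet_svPreimage [TopologicalSpace X] [SequentialSpace X]
    [OpensMeasurableSpace X] [TopologicalSpace Y] [MeasurableSpace Y] [BorelSpace Y]
    (hcont : ∀ x, SVContinuousAt Φ x) (hsv : ∀ᵐ x ∂ω, ∃ y, Φ x = {y}) {E : Set Y}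
    (hE : MeasurableSet E) : NullMeasurableSet (SVPreimage Φ E) ω := by
  induction E, hE using MeasurableSet.induction_on_open with
  | isOpen U hU =>
    have hclosed : NullMeasurableSet (SVPreimage Φ Uᶜ) ω :=
      (isClosed_svPreimage hcont hU.isClosed_compl).measurableSet.nullMeasurableSet
    simpa only [compl_compl] using hclosed.svPreimage_compl hsv
  | compl t _ ht => exact ht.svPreimage_compl hsv
  | iUnion f _ _ hf => exact .svPreimage_iUnion hf

end Measure

end SetValued

theorem stmt0_general {X Y : Type*} [MetricSpace X] [CompactSpace X] [MetricSpace Y]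
    [MeasurableSpace X] [BorelSpace X] [MeasurableSpace Y] [BorelSpace Y]
    (ω : Measure X)
    (Φ : X → Set Y)
    (hcont : ∀ x, SVContinuousAt Φ x)
    (hsv : ∀ᵐ x ∂ω, ∃ y, Φ x = {y}) :
    -- every Borel set belongs to the σ-algebra 𝒞 = {E : Φ⁻¹(E) is ω-measurable}
    (∀ E : Set Y, MeasurableSet E → NullMeasurableSet (SVPreimage Φ E) ω) ∧
    -- 𝒞 is a σ-algebra: contains ∅, closed under complements and countable unions
    (NullMeasurableSet (SVPreimage Φ (∅ : Set Y)) ω) ∧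
    (∀ E : Set Y, NullMeasurableSet (SVPreimage Φ E) ω →
      NullMeasurableSet (SVPreimage Φ Eᶜ) ω) ∧
    (∀ E : ℕ → Set Y, (∀ i, NullMeasurableSet (SVPreimage Φ (E i)) ω) →
      NullMeasurableSet (SVPreimage Φ (⋃ i, E i)) ω) ∧
    -- Φ⁻¹(K) is compact for every compact K
    (∀ K : Set Y, IsCompact K → IsCompact (SVPreimage Φ K)) ∧
    -- countable additivity of M_Φ on 𝒞
    (∀ E : ℕ → Set Y, (∀ i, NullMeasurableSet (SVPreimage Φ (E i)) ω) →
      (Pairwise fun i j => Disjoint (E i) (E j)) →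
      ω (SVPreimage Φ (⋃ i, E i)) = ∑' i, ω (SVPreimage Φ (E i))) :=
  ⟨fun _ hE => nullMeasurableSet_svPreimage hcont hsv hE,
    by simp only [svPreimage_empty, nullMeasurableSet_empty],
    fun _ hE => hE.svPreimage_compl hsv,
    fun _ hE => .svPreimage_iUnion hE,
    fun _ hK => isCompact_svPreimage hcont hK,
    fun _ hE hdisj => measure_svPreimage_iUnion hsv hE hdisj⟩

/-- Lemma 2.1: for `Φ ∈ C_s(X,Y)`, the set function `M_Φ(E) = ω(Φ⁻¹(E))` is a Radon measure:
the sets `E` with `Φ⁻¹(E)` `ω`-measurable form a σ-algebra containing the Borel sets,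
`Φ⁻¹(K)` is compact for compact `K`, and `M_Φ` is countably additive on this σ-algebra. -/
theorem stmt0 {X Y : Type*} [MetricSpace X] [CompactSpace X] [MetricSpace Y] [CompactSpace Y]
    [MeasurableSpace X] [BorelSpace X] [MeasurableSpace Y] [BorelSpace Y]
    (ω : Measure X) [IsFiniteMeasure ω]
    (Φ : X → Set Y)
    (hne : ∀ x, (Φ x).Nonempty)
    (hcont : ∀ x, SVContinuousAt Φ x)
    (hsv : ∀ᵐ x ∂ω, ∃ y, Φ x = {y})
    (hsurj : (⋃ x, Φ x) = Set.univ) :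
    -- every Borel set belongs to the σ-algebra 𝒞 = {E : Φ⁻¹(E) is ω-measurable}
    (∀ E : Set Y, MeasurableSet E → NullMeasurableSet (SVPreimage Φ E) ω) ∧
    -- 𝒞 is a σ-algebra: contains ∅, closed under complements and countable unions
    (NullMeasurableSet (SVPreimage Φ (∅ : Set Y)) ω) ∧
    (∀ E : Set Y, NullMeasurableSet (SVPreimage Φ E) ω →
      NullMeasurableSet (SVPreimage Φ Eᶜ) ω) ∧
    (∀ E : ℕ → Set Y, (∀ i, NullMeasurableSet (SVPreimage Φ (E i)) ω) →
      NullMeasurableSet (SVPreimage Φ (⋃ i, E i)) ω) ∧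
    -- Φ⁻¹(K) is compact for every compact K
    (∀ K : Set Y, IsCompact K → IsCompact (SVPreimage Φ K)) ∧
    -- countable additivity of M_Φ on 𝒞
    (∀ E : ℕ → Set Y, (∀ i, NullMeasurableSet (SVPreimage Φ (E i)) ω) →
      (Pairwise fun i j => Disjoint (E i) (E j)) →
      ω (SVPreimage Φ (⋃ i, E i)) = ∑' i, ω (SVPreimage Φ (E i))) :=
  stmt0_general ω Φ hcont hsv
end

section
/- Let X, Y be compact metric spaces, ω a finite Borel measure on X, p₁,…,p_N distinct points of Y and g₁,…,g_N > 0 with N ≥ 2. Let F ⊆ C⁺(X) and T : F → C_s(X,Y) be such that F is T-concave and condition (A3) holds. Assume ω(X) = Σᵢ gᵢ and that there exist b₁⁰ ∈ (α_{p₁},β_{p₁}) and bᵢ⁰ ∈ (α_{pᵢ},β_{pᵢ}) (2 ≤ i ≤ N) such that ρ₀ = min_{1≤i≤N} h_{bᵢ⁰,pᵢ} satisfies M_{T(ρ₀)}({pᵢ}) ≤ gᵢ for 2 ≤ i ≤ N. Then there exist bᵢ ∈ (α_{pᵢ},β_{pᵢ}) for 2 ≤ i ≤ N such that, with b₁ =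 b₁⁰, the function ρ(x) = min_{1≤i≤N} h_{bᵢ,pᵢ}(x) satisfies M_{T(ρ)}(E) = Σ_{i : pᵢ∈E} gᵢ for every Borel set E ⊆ Y, i.e. M_{T(ρ)} = Σᵢ gᵢ δ_{pᵢ}. -/
open Filter MeasureTheory Topology

/-- `Φ ∈ C_s(X,Y)`: nonempty values, continuous everywhere, single-valued `ω`-a.e.,
and surjective. -/
def IsCs {X Y : Type*} [TopologicalSpace X] [TopologicalSpace Y] [MeasurableSpace X]
    (ω : Measure X) (Φ : X → Set Y) : Prop :=
  (∀ x, (Φ x).Nonempty) ∧ (∀ x, SVContinuousAt Φ x) ∧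
    (∀ᵐ x ∂ω, ∃ y, Φ x = {y}) ∧ (⋃ x, Φ x) = Set.univ

/-- Continuity of `T : F → C_s(X,Y)` at `φ ∈ F` (Definition 2.2). -/
def TContinuousAt {X Y : Type*} [TopologicalSpace X] [TopologicalSpace Y]
    (F : Set C(X, ℝ)) (T : C(X, ℝ) → X → Set Y) (φ : C(X, ℝ)) : Prop :=
  ∀ φs : ℕ → C(X, ℝ), (∀ j, φs j ∈ F) →
    TendstoUniformly (fun j x => φs j x) (fun x => φ x) atTop →
    ∀ (x₀ : X) (ys : ℕ → Y), (∀ j, ys j ∈ T (φs j) x₀) →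
      ∃ (s : ℕ → ℕ) (y₀ : Y), StrictMono s ∧ y₀ ∈ T φ x₀ ∧ Tendsto (ys ∘ s) atTop (nhds y₀)

open Set
open scoped ENNReal

/-!
For admissible parameters `b` put `ρ_b = min_i h_{b i, p i}` and `A_i(b) = T(ρ_b)⁻¹{p i}`.
By (A2), `p i ∈ T(ρ_b)(x)` whenever `h_{b i, p i}` attains the minimum at `x`; since `T(ρ_b)` is
single-valued almost everywhere and the `p i` are distinct, the `A_i(b)` partition `X` up to null
sets, so `M_{T(ρ_b)} = ∑ i, ω(A_i(b)) δ_{p i}`. Continuity of `T` makes `b ↦ ω(A_i(b))` upper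
semicontinuous, hence continuous because the total mass is fixed, and lowering the other
coordinates can only decrease `ω(A_i(b))`.

Starting from `b⁰`, lower each coordinate `i ≠ 0` separately, by the intermediate value theorem,
until `ω(A_i) = g i`, and then take all the new coordinates at once: by monotonicity the masses
stay `≤ g i`. Iterating gives a decreasing sequence of parameters. It cannot run off to the ends
`α (p i)`, because `A_0` keeps mass `≥ g 0 > 0` while `b 0` is fixed, and its limit is the
required `b`.
-/

theorem ENNReal.le_of_sum_eq_of_forall_ne_le {ι : Type*} [Fintype ι] {a c : ι → ℝ≥0∞}
    (hsum : ∑ i, a i = ∑ i, c i) (hfin : ∑ i, c i ≠ ∞) {i₀ : ι} (hle : ∀ i ≠ i₀, a i ≤ c i) :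
    c i₀ ≤ a i₀ := by
  classical
  have hrest : ∑ i ∈ Finset.univ.erase i₀, a i ≤ ∑ i ∈ Finset.univ.erase i₀, c i :=
    Finset.sum_le_sum fun i hi => hle i (Finset.ne_of_mem_erase hi)
  have hrest_fin : ∑ i ∈ Finset.univ.erase i₀, c i ≠ ∞ :=
    ne_top_of_le_ne_top hfin (Finset.sum_le_sum_of_subset (Finset.erase_subset _ _))
  refine (ENNReal.add_le_add_iff_right hrest_fin).1 ?_
  calc c i₀ + ∑ i ∈ Finset.univ.erase i₀, c i = a i₀ + ∑ i ∈ Finset.univ.erase i₀, a i := by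
        rw [Finset.add_sum_erase _ _ (Finset.mem_univ _),
          Finset.add_sum_erase _ _ (Finset.mem_univ _), hsum]
    _ ≤ a i₀ + ∑ i ∈ Finset.univ.erase i₀, c i := by gcongr

theorem ENNReal.tendsto_of_limsup_le_of_sum_eq {ι : Type*} [Fintype ι] {a : ℕ → ι → ℝ≥0∞}
    {c : ι → ℝ≥0∞} (hle : ∀ i, limsup (fun k => a k i) atTop ≤ c i)
    (hsum : ∀ k, ∑ i, a k i = ∑ i, c i) (hfin : ∑ i, c i ≠ ∞) :
    Tendsto a atTop (𝓝 c) := by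
  refine tendsto_of_subseq_tendsto fun ns hns => ?_
  obtain ⟨v, ms, hms, hv⟩ := CompactSpace.tendsto_subseq (a ∘ ns)
  have hvi : ∀ i, Tendsto (fun k => a (ns (ms k)) i) atTop (𝓝 (v i)) :=
    fun i => ((continuous_apply i).tendsto v).comp hv
  have hv_le : ∀ i, v i ≤ c i := fun i => calc
    v i = limsup ((fun k => a k i) ∘ (ns ∘ ms)) atTop := (hvi i).limsup_eq.symm
    _ ≤ limsup (fun k => a k i) atTop := by
        rw [limsup_comp]; exact limsup_le_limsup_of_le (hns.comp hms.tendsto_atTop)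
    _ ≤ c i := hle i
  have hv_sum : ∑ i, v i = ∑ i, c i :=
    tendsto_nhds_unique (tendsto_finsetSum _ fun i _ => hvi i)
      (by simp only [hsum]; exact tendsto_const_nhds)
  have hvc : v = c := funext fun i => (hv_le i).antisymm
    (ENNReal.le_of_sum_eq_of_forall_ne_le hv_sum hfin fun j _ => hv_le j)
  exact ⟨ms, hvc ▸ hv⟩

theorem MeasureTheory.limsup_measure_le_measure_limsup {α : Type*} [MeasurableSpace α]
    (μ : Measure α) [IsFiniteMeasure μ] {s : ℕ → Set α} (hs : ∀ n, NullMeasurableSet (s n) μ) :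
    limsup (fun n => μ (s n)) atTop ≤ μ (limsup s atTop) := by
  have hanti : Antitone fun n => ⋃ k ≥ n, s k :=
    fun n m hnm => biUnion_mono (fun k hk => hnm.trans hk) fun _ _ => subset_rfl
  calc limsup (fun n => μ (s n)) atTop = ⨅ n, ⨆ k ≥ n, μ (s k) := limsup_eq_iInf_iSup_of_nat
    _ ≤ ⨅ n, μ (⋃ k ≥ n, s k) :=
        iInf_mono fun n => iSup₂_le fun k hk => measure_mono (subset_biUnion_of_mem hk)
    _ = μ (⋂ n, ⋃ k ≥ n, s k) :=
        (hanti.measure_iInter (fun n => .biUnion (to_countable _) fun k _ => hs k)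
          ⟨0, measure_ne_top μ _⟩).symm
    _ = μ (limsup s atTop) := by rw [limsup_eq_iInf_iSup_of_nat]; rfl

theorem ContinuousMap.exists_pos_forall_le {X : Type*} [TopologicalSpace X] [CompactSpace X]
    (f : C(X, ℝ)) (hf : ∀ x, 0 < f x) : ∃ ε > 0, ∀ x, ε ≤ f x := by
  cases isEmpty_or_nonempty X
  · exact ⟨1, one_pos, fun x => isEmptyElim x⟩
  · obtain ⟨x₀, -, hx₀⟩ := isCompact_univ.exists_isMinOn univ_nonempty f.continuous.continuousOn
    exact ⟨f x₀, hf x₀, fun x => hx₀ (mem_univ x)⟩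

theorem ContinuousMap.dist_finset_inf'_le {X ι : Type*} [TopologicalSpace X] [CompactSpace X]
    {s : Finset ι} (hs : s.Nonempty) {f g : ι → C(X, ℝ)} {ε : ℝ} (hε : 0 ≤ ε)
    (hfg : ∀ i ∈ s, dist (f i) (g i) ≤ ε) : dist (s.inf' hs f) (s.inf' hs g) ≤ ε := by
  have key : ∀ {f g : ι → C(X, ℝ)}, (∀ i ∈ s, dist (f i) (g i) ≤ ε) →
      ∀ x, s.inf' hs (f · x) - ε ≤ s.inf' hs (g · x) := fun hfg x =>
    Finset.le_inf' _ _ fun i hi => sub_le_iff_le_add.2 <| (Finset.inf'_le _ hi).trans <|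
      sub_le_iff_le_add'.1 ((le_abs_self _).trans <| (Real.dist_eq _ _ ▸
        (dist_apply_le_dist x).trans (hfg i hi)))
  refine (dist_le hε).2 fun x => ?_
  rw [inf'_apply, inf'_apply, Real.dist_eq, abs_sub_le_iff]
  exact ⟨sub_le_comm.1 (key hfg x),
    sub_le_comm.1 (key (fun i hi => dist_comm (f i) (g i) ▸ hfg i hi) x)⟩

theorem mem_svPreimage_singleton {X Y : Type*} {Φ : X → Set Y} {y : Y} {x : X} :
    x ∈ SVPreimage Φ {y} ↔ y ∈ Φ x :=
  ⟨fun ⟨_, hz, rfl⟩ => hz, fun hy => ⟨y, hy, rfl⟩⟩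

theorem isClosed_svPreimage_singleton {X Y : Type*} [TopologicalSpace X] [SequentialSpace X]
    [TopologicalSpace Y] [T1Space Y] {Φ : X → Set Y}
    (hΦ : ∀ x, SVContinuousAt Φ x) (y : Y) : IsClosed (SVPreimage Φ {y}) := by
  refine IsSeqClosed.isClosed fun xk x hxk hlim => ?_
  obtain ⟨s, y₀, -, hy₀, hys⟩ :=
    hΦ x xk (fun _ => y) hlim fun k => mem_svPreimage_singleton.1 (hxk k)
  rw [mem_svPreimage_singleton, tendsto_const_nhds_iff.1 hys]
  exact hy₀

theorem measure_svPreimage_eq_sum {X Y ι : Type*} [MeasurableSpace X] {ω : Measure X}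
    [Fintype ι] {Φ : X → Set Y} {p : ι → Y} (hp : Function.Injective p)
    (hsv : ∀ᵐ x ∂ω, ∃ y, Φ x = {y})
    (hcover : ∀ x, ∃ i, p i ∈ Φ x) (hmeas : ∀ i, NullMeasurableSet (SVPreimage Φ {p i}) ω)
    (E : Set Y) :
    ω (SVPreimage Φ E) = ∑ i, E.indicator (fun _ => ω (SVPreimage Φ {p i})) (p i) := by
  classical
  have hae : SVPreimage Φ E =ᵐ[ω] ⋃ i ∈ Finset.univ.filter (p · ∈ E), SVPreimage Φ {p i} := by
    filter_upwards [hsv] with x ⟨y, hy⟩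
    obtain ⟨i, hi⟩ := hcover x
    rw [hy, mem_singleton_iff] at hi
    subst hi
    change (x ∈ SVPreimage Φ E) = (x ∈ ⋃ j ∈ Finset.univ.filter (p · ∈ E), SVPreimage Φ {p j})
    simp [SVPreimage, hy, hp.eq_iff]
  have hdisj : (Finset.univ.filter (p · ∈ E) : Set ι).Pairwise
      (Function.onFun (AEDisjoint ω) fun i => SVPreimage Φ {p i}) := by
    intro i _ j _ hij
    refine measure_mono_null ?_ (ae_iff.1 hsv)
    rintro x ⟨hxi, hxj⟩ ⟨y, hy⟩
    rw [mem_svPreimage_singleton, hy] at hxi hxj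
    exact hij (hp (hxi.trans hxj.symm))
  rw [measure_congr hae, measure_biUnion_finset₀ hdisj fun i _ => hmeas i, Finset.sum_filter]
  rfl

theorem TContinuousAt.mem_of_frequently_mem {X Y : Type*} [TopologicalSpace X] [CompactSpace X]
    [TopologicalSpace Y] [T1Space Y] {F : Set C(X, ℝ)}
    {T : C(X, ℝ) → X → Set Y} {φ : C(X, ℝ)} (hT : TContinuousAt F T φ) {φs : ℕ → C(X, ℝ)}
    (hφs : ∀ k, φs k ∈ F) (hlim : Tendsto φs atTop (𝓝 φ)) {x : X} {y : Y}
    (hfreq : ∃ᶠ k in atTop, y ∈ T (φs k) x) : y ∈ T φ x := by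
  obtain ⟨ψ, hψ, hψy⟩ := extraction_of_frequently_atTop hfreq
  obtain ⟨s, y₀, -, hy₀, hys⟩ := hT (φs ∘ ψ) (fun k => hφs _)
    (ContinuousMap.tendsto_iff_tendstoUniformly.1 (hlim.comp hψ.tendsto_atTop)) x
    (fun _ => y) hψy
  rwa [tendsto_const_nhds_iff.1 hys]

section ConcaveFamily

variable {X Y : Type*} [TopologicalSpace X]

/-- `F ⊆ C⁺(X)`, `T` maps `F` into `C_s(X, Y)`, and `F` is `T`-concave. -/
structure IsTConcave [TopologicalSpace Y] [MeasurableSpace X] (ω : Measure X) (F : Set C(X, ℝ))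
    (T : C(X, ℝ) → X → Set Y) : Prop where
  pos : ∀ f ∈ F, ∀ x, 0 < f x
  inf_mem : ∀ f₁ ∈ F, ∀ f₂ ∈ F, f₁ ⊓ f₂ ∈ F
  isCs : ∀ f ∈ F, IsCs ω (T f)
  continuousAt : ∀ φ ∈ F, TContinuousAt F T φ
  subset_inf : ∀ φ₁ ∈ F, ∀ φ₂ ∈ F, ∀ x₀ : X, φ₁ x₀ ≤ φ₂ x₀ → T φ₁ x₀ ⊆ T (φ₁ ⊓ φ₂) x₀

/-- The family `h t y = h_{t,y}`, `α y < t < β y`, of condition (A3). -/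
structure IsA3Family (F : Set C(X, ℝ)) (T : C(X, ℝ) → X → Set Y) (α β : Y → EReal)
    (h : ℝ → Y → C(X, ℝ)) : Prop where
  mem : ∀ (y : Y) (t : ℝ), α y < (t : EReal) → (t : EReal) < β y → h t y ∈ F
  mem_T : ∀ (y : Y) (t : ℝ), α y < (t : EReal) → (t : EReal) < β y → ∀ x : X, y ∈ T (h t y) x
  mono : ∀ (y : Y) (t s : ℝ), α y < (t : EReal) → (s : EReal) < β y → t ≤ s →
    ∀ x, h t y x ≤ h s y x
  small : ∀ (y : Y), ∀ ε : ℝ, 0 < ε → ∃ t₀ : ℝ, α y < (t₀ : EReal) ∧ (t₀ : EReal) < β y ∧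
    ∀ t : ℝ, α y < (t : EReal) → t ≤ t₀ → ∀ x, h t y x < ε
  cont : ∀ (y : Y) (t : ℝ), α y < (t : EReal) → (t : EReal) < β y →
    ∀ ε : ℝ, 0 < ε → ∃ δ : ℝ, 0 < δ ∧ ∀ t' : ℝ, α y < (t' : EReal) → (t' : EReal) < β y →
      |t' - t| < δ → ∀ x, |h t' y x - h t y x| ≤ ε

theorem IsTConcave.subset_of_le [TopologicalSpace Y] [MeasurableSpace X] {ω : Measure X}
    {F : Set C(X, ℝ)} {T : C(X, ℝ) → X → Set Y} (hT : IsTConcave ω F T) {φ ψ : C(X, ℝ)}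
    (hφ : φ ∈ F) (hψ : ψ ∈ F) (hψφ : ψ ≤ φ) {x : X} (hx : φ x ≤ ψ x) : T φ x ⊆ T ψ x := by
  simpa only [inf_eq_right.2 hψφ] using hT.subset_inf φ hφ ψ hψ x hx

theorem IsA3Family.continuousAt [CompactSpace X] {F : Set C(X, ℝ)} {T : C(X, ℝ) → X → Set Y}
    {α β : Y → EReal} {h : ℝ → Y → C(X, ℝ)} (hh : IsA3Family F T α β h) {y : Y} {t : ℝ}
    (ht : α y < (t : EReal) ∧ (t : EReal) < β y) : ContinuousAt (fun s => h s y) t := by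
  refine (Metric.continuousWithinAt_iff.2 fun ε hε => ?_).continuousAt
    ((isOpen_Ioo.preimage continuous_coe_real_ereal).mem_nhds ht)
  obtain ⟨δ, hδ, hδh⟩ := hh.cont y t ht.1 ht.2 (ε / 2) (half_pos hε)
  refine ⟨δ, hδ, fun s hs hst => ((ContinuousMap.dist_le (half_pos hε).le).2 fun x => ?_).trans_lt
    (half_lt_self hε)⟩
  rw [Real.dist_eq] at hst ⊢
  exact hδh s hs.1 hs.2 hst x

end ConcaveFamily

noncomputable def familyMin {X Y ι : Type*} [TopologicalSpace X] [Fintype ι] [Nonempty ι]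
    (h : ℝ → Y → C(X, ℝ)) (p : ι → Y) (b : ι → ℝ) : C(X, ℝ) :=
  Finset.univ.inf' Finset.univ_nonempty fun i => h (b i) (p i)

def admissibleParams {Y ι : Type*} (α β : Y → EReal) (p : ι → Y) : Set (ι → ℝ) :=
  {b | ∀ i, α (p i) < (b i : EReal) ∧ (b i : EReal) < β (p i)}

section AdmissibleParams

variable {Y ι : Type*} {α β : Y → EReal} {p : ι → Y} {b : ι → ℝ}

theorem isOpen_admissibleParams [Finite ι] : IsOpen (admissibleParams α β p) := by
  simp only [admissibleParams, ofPred_forall, ofPred_and]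
  exact isOpen_iInter_of_finite fun i =>
    (isOpen_lt continuous_const (continuous_coe_real_ereal.comp (continuous_apply i))).inter
      (isOpen_lt (continuous_coe_real_ereal.comp (continuous_apply i)) continuous_const)

theorem mem_admissibleParams_of_le {c : ι → ℝ} (hb : b ∈ admissibleParams α β p) (hcb : c ≤ b)
    (hc : ∀ i, α (p i) < (c i : EReal)) : c ∈ admissibleParams α β p :=
  fun i => ⟨hc i, (EReal.coe_le_coe_iff.2 (hcb i)).trans_lt (hb i).2⟩

theorem update_mem_admissibleParams [DecidableEq ι] (hb : b ∈ admissibleParams α β p) {i : ι}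
    {t : ℝ} (ht : α (p i) < (t : EReal)) (htb : t ≤ b i) :
    Function.update b i t ∈ admissibleParams α β p := by
  refine mem_admissibleParams_of_le hb (update_le_self_iff.2 htb) fun j => ?_
  rcases eq_or_ne j i with rfl | hj
  · rwa [Function.update_self]
  · rw [Function.update_of_ne hj]
    exact (hb j).1

end AdmissibleParams

section FamilyMin

variable {X Y ι : Type*} [TopologicalSpace X] [Fintype ι] [Nonempty ι]
  {h : ℝ → Y → C(X, ℝ)} {p : ι → Y} {α β : Y → EReal} {b : ι → ℝ}

theorem familyMin_apply (x : X) :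
    familyMin h p b x = Finset.univ.inf' Finset.univ_nonempty fun i => h (b i) (p i) x :=
  ContinuousMap.inf'_apply _ _ _

variable (h p b) in
theorem familyMin_le (i : ι) : familyMin h p b ≤ h (b i) (p i) :=
  Finset.inf'_le _ (Finset.mem_univ i)

theorem le_familyMin_iff {x : X} {c : ℝ} : c ≤ familyMin h p b x ↔ ∀ i, c ≤ h (b i) (p i) x := by
  simp [familyMin_apply]

variable (h p b) in
theorem exists_familyMin_eq (x : X) : ∃ i, h (b i) (p i) x = familyMin h p b x := by
  obtain ⟨i, -, hi⟩ := Finset.exists_mem_eq_inf' Finset.univ_nonempty fun i => h (b i) (p i) x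
  exact ⟨i, by rw [familyMin_apply, hi]⟩

variable {F : Set C(X, ℝ)} {T : C(X, ℝ) → X → Set Y}

theorem familyMin_mem [TopologicalSpace Y] [MeasurableSpace X] {ω : Measure X}
    (hT : IsTConcave ω F T) (hh : IsA3Family F T α β h) (hb : b ∈ admissibleParams α β p) :
    familyMin h p b ∈ F :=
  Finset.inf'_mem F hT.inf_mem _ _ _ fun i _ => hh.mem _ _ (hb i).1 (hb i).2

theorem familyMin_mono (hh : IsA3Family F T α β h) {c : ι → ℝ}
    (hb : b ∈ admissibleParams α β p) (hc : c ∈ admissibleParams α β p) (hbc : b ≤ c) :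
    familyMin h p b ≤ familyMin h p c := fun x =>
  le_familyMin_iff.2 fun i =>
    (familyMin_le h p b i x).trans (hh.mono _ _ _ (hb i).1 (hc i).2 (hbc i) x)

theorem continuousAt_familyMin [CompactSpace X] (hh : IsA3Family F T α β h)
    (hb : b ∈ admissibleParams α β p) : ContinuousAt (familyMin h p) b := by
  refine Metric.continuousAt_iff'.2 fun ε hε => ?_
  have hclose : ∀ i, ∀ᶠ c in 𝓝 b, dist (h (c i) (p i)) (h (b i) (p i)) < ε / 2 := fun i =>
    ((hh.continuousAt (hb i)).tendsto.comp ((continuous_apply i).tendsto b)).eventually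
      (Metric.ball_mem_nhds _ (half_pos hε))
  filter_upwards [eventually_all.2 hclose] with c hc
  exact (ContinuousMap.dist_finset_inf'_le _ (half_pos hε).le fun i _ => (hc i).le).trans_lt
    (half_lt_self hε)

end FamilyMin

section Masses

variable {X Y ι : Type*} [TopologicalSpace X] [MeasurableSpace X] [TopologicalSpace Y]
  [Fintype ι] [Nonempty ι] {ω : Measure X} {F : Set C(X, ℝ)} {T : C(X, ℝ) → X → Set Y}
  {α β : Y → EReal} {h : ℝ → Y → C(X, ℝ)} {p : ι → Y} {b : ι → ℝ}

theorem mem_T_familyMin_of_le (hT : IsTConcave ω F T) (hh : IsA3Family F T α β h)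
    (hb : b ∈ admissibleParams α β p) {i : ι} {x : X}
    (hx : h (b i) (p i) x ≤ familyMin h p b x) : p i ∈ T (familyMin h p b) x :=
  hT.subset_of_le (hh.mem _ _ (hb i).1 (hb i).2) (familyMin_mem hT hh hb)
    (familyMin_le h p b i) hx (hh.mem_T _ _ (hb i).1 (hb i).2 x)

theorem exists_mem_T_familyMin (hT : IsTConcave ω F T) (hh : IsA3Family F T α β h)
    (hb : b ∈ admissibleParams α β p) (x : X) : ∃ i, p i ∈ T (familyMin h p b) x :=
  let ⟨i, hi⟩ := exists_familyMin_eq h p b x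
  ⟨i, mem_T_familyMin_of_le hT hh hb hi.le⟩

theorem le_familyMin_of_T_eq_singleton (hT : IsTConcave ω F T) (hh : IsA3Family F T α β h)
    (hp : Function.Injective p) (hb : b ∈ admissibleParams α β p) {i : ι} {x : X}
    (hx : T (familyMin h p b) x = {p i}) : h (b i) (p i) x ≤ familyMin h p b x := by
  obtain ⟨j, hj⟩ := exists_familyMin_eq h p b x
  have hj_mem := mem_T_familyMin_of_le hT hh hb hj.le
  rw [hx, mem_singleton_iff] at hj_mem
  rw [← hp hj_mem, hj]

theorem measure_svPreimage_familyMin_mono (hT : IsTConcave ω F T) (hh : IsA3Family F T α β h)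
    (hp : Function.Injective p) {c : ι → ℝ} (hb : b ∈ admissibleParams α β p)
    (hc : c ∈ admissibleParams α β p) (hbc : b ≤ c) {i : ι} (hi : b i = c i) :
    ω (SVPreimage (T (familyMin h p b)) {p i}) ≤ ω (SVPreimage (T (familyMin h p c)) {p i}) := by
  have hρb := familyMin_mem hT hh hb
  have hρc := familyMin_mem hT hh hc
  refine measure_mono_ae ?_
  filter_upwards [(hT.isCs _ hρb).2.2.1] with x ⟨y, hy⟩
  intro (hx : x ∈ SVPreimage _ _)
  rw [mem_svPreimage_singleton, hy, mem_singleton_iff] at hx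
  subst hx
  have hmin := le_familyMin_of_T_eq_singleton hT hh hp hb hy
  obtain ⟨z, hz⟩ := (hT.isCs _ hρc).1 x
  have hz' := hT.subset_of_le hρc hρb (familyMin_mono hh hb hc hbc)
    ((familyMin_le h p c i x).trans (hi ▸ hmin)) hz
  rw [hy, mem_singleton_iff] at hz'
  exact mem_svPreimage_singleton.2 (hz' ▸ hz)

theorem exists_le_familyMin_of_measure_ne_zero (hT : IsTConcave ω F T)
    (hh : IsA3Family F T α β h) (hp : Function.Injective p) (hb : b ∈ admissibleParams α β p)
    {i : ι} (hi : ω (SVPreimage (T (familyMin h p b)) {p i}) ≠ 0) :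
    ∃ x, h (b i) (p i) x ≤ familyMin h p b x := by
  by_contra! hlt
  refine hi (measure_mono_null ?_ (ae_iff.1 (hT.isCs _ (familyMin_mem hT hh hb)).2.2.1))
  rintro x hx ⟨y, hy⟩
  rw [mem_svPreimage_singleton, hy, mem_singleton_iff] at hx
  subst hx
  exact (hlt x).not_ge (le_familyMin_of_T_eq_singleton hT hh hp hb hy)

theorem exists_lt_of_measure_svPreimage_familyMin_ne_zero [CompactSpace X]
    (hT : IsTConcave ω F T) (hh : IsA3Family F T α β h) (hp : Function.Injective p) {i₀ : ι} {c : ℝ}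
    (hc : α (p i₀) < (c : EReal) ∧ (c : EReal) < β (p i₀)) (i : ι) :
    ∃ t₀ : ℝ, α (p i) < (t₀ : EReal) ∧ ∀ b ∈ admissibleParams α β p, b i₀ = c →
      ω (SVPreimage (T (familyMin h p b)) {p i₀}) ≠ 0 → t₀ < b i := by
  obtain ⟨ε, hε, hεh⟩ := (h c (p i₀)).exists_pos_forall_le (hT.pos _ (hh.mem _ _ hc.1 hc.2))
  obtain ⟨t₀, ht₀α, -, ht₀⟩ := hh.small (p i) ε hε
  refine ⟨t₀, ht₀α, fun b hb hbc hne => lt_of_not_ge fun hbt => ?_⟩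
  obtain ⟨x, hx⟩ := exists_le_familyMin_of_measure_ne_zero hT hh hp hb hne
  rw [hbc] at hx
  exact (ht₀ (b i) (hb i).1 hbt x).not_ge ((hεh x).trans (hx.trans (familyMin_le h p b i x)))

theorem exists_tendsto_of_antitone [CompactSpace X] (hT : IsTConcave ω F T)
    (hh : IsA3Family F T α β h) (hp : Function.Injective p) {i₀ : ι} {B : ℕ → ι → ℝ}
    (hB : ∀ k, B k ∈ admissibleParams α β p) (hanti : Antitone B) (hB₀ : ∀ k, B k i₀ = B 0 i₀)
    (hpos : ∀ k, ω (SVPreimage (T (familyMin h p (B k))) {p i₀}) ≠ 0) :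
    ∃ b ∈ admissibleParams α β p, Tendsto B atTop (𝓝 b) := by
  choose t₀ ht₀α ht₀ using exists_lt_of_measure_svPreimage_familyMin_ne_zero hT hh hp (hB 0 i₀)
  have hlow : ∀ i k, t₀ i ≤ B k i := fun i k => (ht₀ i (B k) (hB k) (hB₀ k) (hpos k)).le
  have hbdd : ∀ i, BddBelow (range fun k => B k i) :=
    fun i => ⟨t₀ i, forall_mem_range.2 (hlow i)⟩
  refine ⟨fun i => ⨅ k, B k i, fun i => ⟨?_, ?_⟩,
    tendsto_pi_nhds.2 fun i => tendsto_atTop_ciInf (fun k l hkl => hanti hkl i) (hbdd i)⟩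
  · exact (ht₀α i).trans_le (EReal.coe_le_coe_iff.2 (le_ciInf (hlow i)))
  · exact (EReal.coe_le_coe_iff.2 (ciInf_le (hbdd i) 0)).trans_lt (hB 0 i).2

section Continuity

variable [SequentialSpace X] [OpensMeasurableSpace X] [T1Space Y]

theorem measure_svPreimage_familyMin (hT : IsTConcave ω F T) (hh : IsA3Family F T α β h)
    (hp : Function.Injective p) (hb : b ∈ admissibleParams α β p)
    (E : Set Y) :
    ω (SVPreimage (T (familyMin h p b)) E) =
      ∑ i, E.indicator (fun _ => ω (SVPreimage (T (familyMin h p b)) {p i})) (p i) := by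
  have hCs := hT.isCs _ (familyMin_mem hT hh hb)
  exact measure_svPreimage_eq_sum hp hCs.2.2.1 (exists_mem_T_familyMin hT hh hb)
    (fun i => (isClosed_svPreimage_singleton hCs.2.1 _).measurableSet.nullMeasurableSet) E

theorem sum_measure_svPreimage_familyMin (hT : IsTConcave ω F T) (hh : IsA3Family F T α β h)
    (hp : Function.Injective p) (hb : b ∈ admissibleParams α β p) :
    ∑ i, ω (SVPreimage (T (familyMin h p b)) {p i}) = ω univ := by
  have huniv : SVPreimage (T (familyMin h p b)) univ = univ := eq_univ_of_forall fun x =>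
    let ⟨y, hy⟩ := (hT.isCs _ (familyMin_mem hT hh hb)).1 x
    ⟨y, hy, mem_univ y⟩
  rw [← huniv, measure_svPreimage_familyMin hT hh hp hb univ]
  simp

variable [CompactSpace X] [IsFiniteMeasure ω]

theorem tendsto_measure_svPreimage_familyMin (hT : IsTConcave ω F T)
    (hh : IsA3Family F T α β h) (hp : Function.Injective p) {u : ℕ → ι → ℝ}
    (hu : ∀ k, u k ∈ admissibleParams α β p) (hb : b ∈ admissibleParams α β p)
    (hlim : Tendsto u atTop (𝓝 b)) :
    Tendsto (fun k i => ω (SVPreimage (T (familyMin h p (u k))) {p i})) atTop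
      (𝓝 fun i => ω (SVPreimage (T (familyMin h p b)) {p i})) := by
  refine ENNReal.tendsto_of_limsup_le_of_sum_eq (fun i => ?_)
    (fun k => (sum_measure_svPreimage_familyMin hT hh hp (hu k)).trans
      (sum_measure_svPreimage_familyMin hT hh hp hb).symm)
    ((sum_measure_svPreimage_familyMin hT hh hp hb).symm ▸ measure_ne_top ω univ)
  refine (limsup_measure_le_measure_limsup ω fun k => ?_).trans (measure_mono fun x hx => ?_)
  · exact (isClosed_svPreimage_singleton (hT.isCs _ (familyMin_mem hT hh (hu k))).2.1
      _).measurableSet.nullMeasurableSet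
  · rw [mem_limsup_iff_frequently_mem] at hx
    simp only [mem_svPreimage_singleton] at hx ⊢
    exact (hT.continuousAt _ (familyMin_mem hT hh hb)).mem_of_frequently_mem
      (fun k => familyMin_mem hT hh (hu k)) ((continuousAt_familyMin hh hb).tendsto.comp hlim) hx

theorem continuousOn_measure_svPreimage_familyMin (hT : IsTConcave ω F T)
    (hh : IsA3Family F T α β h) (hp : Function.Injective p) (i : ι) :
    ContinuousOn (fun b => ω (SVPreimage (T (familyMin h p b)) {p i}))
      (admissibleParams α β p) := by
  refine isOpen_admissibleParams.continuousOn_iff.2 fun b hb => tendsto_iff_seq_tendsto.2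
    fun u hu => ?_
  obtain ⟨K, hK⟩ := eventually_atTop.1 (hu.eventually (isOpen_admissibleParams.mem_nhds hb))
  refine (tendsto_add_atTop_iff_nat K).1 ?_
  exact ((continuous_apply i).tendsto _).comp (tendsto_measure_svPreimage_familyMin hT hh hp
    (fun k => hK (k + K) (Nat.le_add_left K k)) hb ((tendsto_add_atTop_iff_nat K).2 hu))

variable [DecidableEq ι]

theorem exists_update_measure_svPreimage_familyMin_eq
    (hT : IsTConcave ω F T) (hh : IsA3Family F T α β h) (hp : Function.Injective p)
    (hb : b ∈ admissibleParams α β p) (i : ι) {m : ℝ≥0∞}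
    (hm : ω (SVPreimage (T (familyMin h p b)) {p i}) ≤ m) (hm' : m ≤ ω univ) :
    ∃ t : ℝ, α (p i) < (t : EReal) ∧ t ≤ b i ∧
      ω (SVPreimage (T (familyMin h p (Function.update b i t))) {p i}) = m := by
  obtain ⟨ε, hε, hερ⟩ := (familyMin h p b).exists_pos_forall_le (hT.pos _ (familyMin_mem hT hh hb))
  obtain ⟨t₀, ht₀α, -, ht₀⟩ := hh.small (p i) ε hε
  set t₁ := min t₀ (b i)
  have ht₁α : α (p i) < (t₁ : EReal) :=
    EReal.coe_strictMono.monotone.map_min.symm ▸ lt_min ht₀α (hb i).1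
  have hupd : ∀ t ∈ Icc t₁ (b i), Function.update b i t ∈ admissibleParams α β p := fun t ht =>
    update_mem_admissibleParams hb (ht₁α.trans_le (EReal.coe_le_coe_iff.2 ht.1)) ht.2
  -- `h_{t₁, p i} < ε ≤ ρ_b`, so index `i` is minimal everywhere
  have hfull : ω (SVPreimage (T (familyMin h p (Function.update b i t₁))) {p i}) = ω univ := by
    refine congrArg ω (eq_univ_of_forall fun x => mem_svPreimage_singleton.2
      (mem_T_familyMin_of_le hT hh (hupd t₁ ⟨le_rfl, min_le_right _ _⟩) ?_))
    rw [Function.update_self, le_familyMin_iff]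
    intro j
    rcases eq_or_ne j i with rfl | hj
    · rw [Function.update_self]
    · rw [Function.update_of_ne hj]
      exact ((ht₀ t₁ ht₁α (min_le_left _ _) x).trans_le (hερ x)).le.trans
        (familyMin_le h p b j x)
  have hcont : ContinuousOn
      (fun t => ω (SVPreimage (T (familyMin h p (Function.update b i t))) {p i})) (Icc t₁ (b i)) :=
    (continuousOn_measure_svPreimage_familyMin hT hh hp i).comp
      (continuous_const.update i continuous_id : Continuous (Function.update b i)).continuousOn hupd
  obtain ⟨t, ht, htm⟩ := intermediate_value_Icc' (min_le_right _ _) hcont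
    ⟨by simpa using hm, hfull ▸ hm'⟩
  exact ⟨t, ht₁α.trans_le (EReal.coe_le_coe_iff.2 ht.1), ht.2, htm⟩

theorem exists_next_admissibleParams (hT : IsTConcave ω F T)
    (hh : IsA3Family F T α β h) (hp : Function.Injective p) {g : ι → ℝ≥0∞} {i₀ : ι}
    (hg : ∀ i, g i ≤ ω univ) (b : ι → ℝ) (hb : b ∈ admissibleParams α β p)
    (hsmall : ∀ i ≠ i₀, ω (SVPreimage (T (familyMin h p b)) {p i}) ≤ g i) :
    ∃ b' ∈ admissibleParams α β p,
      (∀ i ≠ i₀, ω (SVPreimage (T (familyMin h p b')) {p i}) ≤ g i) ∧ b' ≤ b ∧ b' i₀ = b i₀ ∧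
      ∀ i ≠ i₀, ω (SVPreimage (T (familyMin h p (Function.update b i (b' i)))) {p i}) = g i := by
  have hcoord : ∀ i, ∃ t : ℝ, α (p i) < (t : EReal) ∧ t ≤ b i ∧ (i = i₀ → t = b i) ∧
      (i ≠ i₀ → ω (SVPreimage (T (familyMin h p (Function.update b i t))) {p i}) = g i) := by
    intro i
    rcases eq_or_ne i i₀ with rfl | hi
    · exact ⟨b i, (hb i).1, le_rfl, fun _ => rfl, fun hne => (hne rfl).elim⟩
    · obtain ⟨t, htα, htb, hteq⟩ :=
        exists_update_measure_svPreimage_familyMin_eq hT hh hp hb i (hsmall i hi) (hg i)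
      exact ⟨t, htα, htb, fun hi' => (hi hi').elim, fun _ => hteq⟩
  choose t htα htb ht₀ hteq using hcoord
  have hupd : ∀ i, Function.update b i (t i) ∈ admissibleParams α β p :=
    fun i => update_mem_admissibleParams hb (htα i) (htb i)
  have ht : t ∈ admissibleParams α β p := mem_admissibleParams_of_le hb htb htα
  refine ⟨t, ht, fun i hi => ?_, htb, ht₀ i₀ rfl, hteq⟩
  calc ω (SVPreimage (T (familyMin h p t)) {p i})
      ≤ ω (SVPreimage (T (familyMin h p (Function.update b i (t i)))) {p i}) :=
        measure_svPreimage_familyMin_mono hT hh hp ht (hupd i)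
          (le_update_iff.2 ⟨le_rfl, fun j _ => htb j⟩) (Function.update_self i (t i) b).symm
    _ = g i := hteq i hi

theorem exists_antitone_admissibleParams (hT : IsTConcave ω F T)
    (hh : IsA3Family F T α β h) (hp : Function.Injective p) {g : ι → ℝ≥0∞} {i₀ : ι}
    (hg : ∀ i, g i ≤ ω univ) {b₀ : ι → ℝ} (hb₀ : b₀ ∈ admissibleParams α β p)
    (hsmall : ∀ i ≠ i₀, ω (SVPreimage (T (familyMin h p b₀)) {p i}) ≤ g i) :
    ∃ B : ℕ → ι → ℝ, Antitone B ∧ ∀ k, B k ∈ admissibleParams α β p ∧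
      (∀ i ≠ i₀, ω (SVPreimage (T (familyMin h p (B k))) {p i}) ≤ g i) ∧ B k i₀ = b₀ i₀ ∧
      ∀ i ≠ i₀, ω (SVPreimage (T (familyMin h p (Function.update (B k) i (B (k + 1) i)))) {p i})
        = g i := by
  choose! next hnext hnext_small hnext_le hnext_i₀ hnext_eq using
    exists_next_admissibleParams hT hh hp (i₀ := i₀) hg
  set B : ℕ → ι → ℝ := fun k => next^[k] b₀
  have hB_succ : ∀ k, B (k + 1) = next (B k) := fun k => Function.iterate_succ_apply' next k b₀
  have hB : ∀ k, B k ∈ admissibleParams α β p ∧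
      (∀ i ≠ i₀, ω (SVPreimage (T (familyMin h p (B k))) {p i}) ≤ g i) ∧ B k i₀ = b₀ i₀ := by
    intro k
    induction k with
    | zero => exact ⟨hb₀, hsmall, rfl⟩
    | succ k ih =>
      rw [hB_succ]
      exact ⟨hnext _ ih.1 ih.2.1, hnext_small _ ih.1 ih.2.1,
        (hnext_i₀ _ ih.1 ih.2.1).trans ih.2.2⟩
  refine ⟨B, antitone_nat_of_succ_le fun k => (hB_succ k).symm ▸ hnext_le _ (hB k).1 (hB k).2.1,
    fun k => ⟨(hB k).1, (hB k).2.1, (hB k).2.2, ?_⟩⟩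
  rw [hB_succ]
  exact hnext_eq _ (hB k).1 (hB k).2.1

theorem exists_admissibleParams_measure_svPreimage_familyMin_eq
    (hT : IsTConcave ω F T) (hh : IsA3Family F T α β h) (hp : Function.Injective p)
    {g : ι → ℝ≥0∞} {i₀ : ι} (hmass : ω univ = ∑ i, g i) (hg₀ : g i₀ ≠ 0) {b₀ : ι → ℝ}
    (hb₀ : b₀ ∈ admissibleParams α β p)
    (hsmall : ∀ i ≠ i₀, ω (SVPreimage (T (familyMin h p b₀)) {p i}) ≤ g i) :
    ∃ b ∈ admissibleParams α β p, b i₀ = b₀ i₀ ∧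
      ∀ i, ω (SVPreimage (T (familyMin h p b)) {p i}) = g i := by
  have hfin : ∑ i, g i ≠ ∞ := hmass ▸ measure_ne_top ω univ
  have hsum : ∀ {b}, b ∈ admissibleParams α β p →
      ∑ i, ω (SVPreimage (T (familyMin h p b)) {p i}) = ∑ i, g i :=
    fun hb => (sum_measure_svPreimage_familyMin hT hh hp hb).trans hmass
  obtain ⟨B, hanti, hB⟩ := exists_antitone_admissibleParams hT hh hp
    (fun i => hmass ▸ Finset.single_le_sum (fun j _ => zero_le) (Finset.mem_univ i))
    hb₀ hsmall
  obtain ⟨b, hb, hlim⟩ := exists_tendsto_of_antitone hT hh hp (fun k => (hB k).1) hanti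
    (fun k => (hB k).2.2.1.trans (hB 0).2.2.1.symm) fun k => (hg₀.bot_lt.trans_le
      (ENNReal.le_of_sum_eq_of_forall_ne_le (hsum (hB k).1) hfin (hB k).2.1)).ne'
  have hcoord : ∀ i, Tendsto (fun k => B k i) atTop (𝓝 (b i)) :=
    fun i => ((continuous_apply i).tendsto b).comp hlim
  have hne : ∀ i ≠ i₀, ω (SVPreimage (T (familyMin h p b)) {p i}) = g i := fun i hi => by
    have hupd : Tendsto (fun k => Function.update (B k) i (B (k + 1) i)) atTop (𝓝 b) := by
      simpa using hlim.update i ((hcoord i).comp (tendsto_add_atTop_nat 1))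
    refine tendsto_nhds_unique (((continuous_apply i).tendsto _).comp
      (tendsto_measure_svPreimage_familyMin hT hh hp (fun k => update_mem_admissibleParams
        (hB k).1 ((hB (k + 1)).1 i).1 (hanti k.le_succ i)) hb hupd)) ?_
    simp only [Function.comp_def, (hB _).2.2.2 i hi]
    exact tendsto_const_nhds
  refine ⟨b, hb, tendsto_nhds_unique (hcoord i₀) ?_, fun i => ?_⟩
  · simp only [(hB _).2.2.1]
    exact tendsto_const_nhds
  rcases eq_or_ne i i₀ with rfl | hi
  · exact le_antisymm
      (ENNReal.le_of_sum_eq_of_forall_ne_le (hsum hb).symm (hsum hb ▸ hfin)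
        fun j hj => (hne j hj).ge)
      (ENNReal.le_of_sum_eq_of_forall_ne_le (hsum hb) hfin fun j hj => (hne j hj).le)
  · exact hne i hi

end Continuity

end Masses

theorem stmt2_general {X Y : Type*} [MetricSpace X] [CompactSpace X] [MetricSpace Y]
    [MeasurableSpace X] [BorelSpace X] [MeasurableSpace Y]
    (ω : Measure X) [IsFiniteMeasure ω]
    (F : Set C(X, ℝ)) (T : C(X, ℝ) → X → Set Y)
    (α β : Y → EReal) (h : ℝ → Y → C(X, ℝ))
    -- F ⊆ C⁺(X)
    (hFpos : ∀ f ∈ F, ∀ x, 0 < f x)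
    -- (A1)
    (hA1 : ∀ f₁ ∈ F, ∀ f₂ ∈ F, f₁ ⊓ f₂ ∈ F)
    -- T maps F into C_s(X,Y)
    (hTCs : ∀ f ∈ F, IsCs ω (T f))
    -- T is continuous at each φ ∈ F
    (hTcont : ∀ φ ∈ F, TContinuousAt F T φ)
    -- (A2)
    (hA2 : ∀ φ₁ ∈ F, ∀ φ₂ ∈ F, ∀ x₀ : X, φ₁ x₀ ≤ φ₂ x₀ → T φ₁ x₀ ⊆ T (φ₁ ⊓ φ₂) x₀)
    -- (A3): the family h_{t,y} ⊆ F with properties (a)-(d)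
    (hA3mem : ∀ (y : Y) (t : ℝ), α y < (t : EReal) → (t : EReal) < β y → h t y ∈ F)
    (hA3a : ∀ (y : Y) (t : ℝ), α y < (t : EReal) → (t : EReal) < β y → ∀ x : X, y ∈ T (h t y) x)
    (hA3b : ∀ (y : Y) (t s : ℝ), α y < (t : EReal) → (s : EReal) < β y → t ≤ s →
      ∀ x, h t y x ≤ h s y x)
    (hA3c : ∀ (y : Y), ∀ ε : ℝ, 0 < ε → ∃ t₀ : ℝ, α y < (t₀ : EReal) ∧ (t₀ : EReal) < β y ∧
      ∀ t : ℝ, α y < (t : EReal) → t ≤ t₀ → ∀ x, h t y x < ε)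
    (hA3d : ∀ (y : Y) (t : ℝ), α y < (t : EReal) → (t : EReal) < β y →
      ∀ ε : ℝ, 0 < ε → ∃ δ : ℝ, 0 < δ ∧ ∀ t' : ℝ, α y < (t' : EReal) → (t' : EReal) < β y →
        |t' - t| < δ → ∀ x, |h t' y x - h t y x| ≤ ε)
    -- the data: distinct points p_i and masses g_i, N ≥ 2
    {N : ℕ} [NeZero N]
    (p : Fin N → Y) (hp : Function.Injective p)
    (g : Fin N → ℝ) (hg : ∀ i, 0 < g i)
    -- conservation of energy
    (hmass : ω Set.univ = ∑ i, ENNReal.ofReal (g i))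
    -- existence of ρ₀ = min h_{bᵢ⁰,pᵢ} with M_{T(ρ₀)}({pᵢ}) ≤ gᵢ for i ≥ 2
    (b0 : Fin N → ℝ) (hb0 : ∀ i, α (p i) < (b0 i : EReal) ∧ (b0 i : EReal) < β (p i))
    (ρ0 : C(X, ℝ)) (hρ0 : ∀ x, ρ0 x = ⨅ i, h (b0 i) (p i) x)
    (hρ0small : ∀ i : Fin N, i ≠ 0 → ω (SVPreimage (T ρ0) {p i}) ≤ ENNReal.ofReal (g i)) :
    ∃ b : Fin N → ℝ, b 0 = b0 0 ∧
      (∀ i, α (p i) < (b i : EReal) ∧ (b i : EReal) < β (p i)) ∧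
      ∃ ρ : C(X, ℝ), (∀ x, ρ x = ⨅ i, h (b i) (p i) x) ∧
        ∀ E : Set Y, MeasurableSet E →
          ω (SVPreimage (T ρ) E) = ∑ i, E.indicator (fun _ => ENNReal.ofReal (g i)) (p i) := by
  have hT : IsTConcave ω F T := ⟨hFpos, hA1, hTCs, hTcont, hA2⟩
  have hh : IsA3Family F T α β h := ⟨hA3mem, hA3a, hA3b, hA3c, hA3d⟩
  have hmin : ∀ b : Fin N → ℝ, ∀ x, familyMin h p b x = ⨅ i, h (b i) (p i) x := fun b x => by
    rw [familyMin_apply, Finset.inf'_univ_eq_ciInf]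
  have hρ0_eq : ρ0 = familyMin h p b0 := ContinuousMap.ext fun x => by rw [hρ0, hmin]
  obtain ⟨b, hb, hb_zero, hmasses⟩ := exists_admissibleParams_measure_svPreimage_familyMin_eq hT hh
    hp (g := fun i => ENNReal.ofReal (g i)) (i₀ := 0) hmass (ENNReal.ofReal_pos.2 (hg 0)).ne'
    hb0 (hρ0_eq ▸ hρ0small)
  refine ⟨b, hb_zero, hb, familyMin h p b, hmin b, fun E _ => ?_⟩
  rw [measure_svPreimage_familyMin hT hh hp hb E]
  simp only [hmasses]

/-- Theorem 2.5 (concave case, discrete target measure). -/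
theorem stmt2 {X Y : Type*} [MetricSpace X] [CompactSpace X] [MetricSpace Y] [CompactSpace Y]
    [MeasurableSpace X] [BorelSpace X] [MeasurableSpace Y] [BorelSpace Y]
    (ω : Measure X) [IsFiniteMeasure ω]
    (F : Set C(X, ℝ)) (T : C(X, ℝ) → X → Set Y)
    (α β : Y → EReal) (h : ℝ → Y → C(X, ℝ))
    -- F ⊆ C⁺(X)
    (hFpos : ∀ f ∈ F, ∀ x, 0 < f x)
    -- (A1)
    (hA1 : ∀ f₁ ∈ F, ∀ f₂ ∈ F, f₁ ⊓ f₂ ∈ F)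
    -- T maps F into C_s(X,Y)
    (hTCs : ∀ f ∈ F, IsCs ω (T f))
    -- T is continuous at each φ ∈ F
    (hTcont : ∀ φ ∈ F, TContinuousAt F T φ)
    -- (A2)
    (hA2 : ∀ φ₁ ∈ F, ∀ φ₂ ∈ F, ∀ x₀ : X, φ₁ x₀ ≤ φ₂ x₀ → T φ₁ x₀ ⊆ T (φ₁ ⊓ φ₂) x₀)
    -- (A3): the family h_{t,y} ⊆ F with properties (a)-(d)
    (hA3mem : ∀ (y : Y) (t : ℝ), α y < (t : EReal) → (t : EReal) < β y → h t y ∈ F)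
    (hA3a : ∀ (y : Y) (t : ℝ), α y < (t : EReal) → (t : EReal) < β y → ∀ x : X, y ∈ T (h t y) x)
    (hA3b : ∀ (y : Y) (t s : ℝ), α y < (t : EReal) → (s : EReal) < β y → t ≤ s →
      ∀ x, h t y x ≤ h s y x)
    (hA3c : ∀ (y : Y), ∀ ε : ℝ, 0 < ε → ∃ t₀ : ℝ, α y < (t₀ : EReal) ∧ (t₀ : EReal) < β y ∧
      ∀ t : ℝ, α y < (t : EReal) → t ≤ t₀ → ∀ x, h t y x < ε)
    (hA3d : ∀ (y : Y) (t : ℝ), α y < (t : EReal) → (t : EReal) < β y →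
      ∀ ε : ℝ, 0 < ε → ∃ δ : ℝ, 0 < δ ∧ ∀ t' : ℝ, α y < (t' : EReal) → (t' : EReal) < β y →
        |t' - t| < δ → ∀ x, |h t' y x - h t y x| ≤ ε)
    -- the data: distinct points p_i and masses g_i, N ≥ 2
    {N : ℕ} [NeZero N] (hN : 2 ≤ N)
    (p : Fin N → Y) (hp : Function.Injective p)
    (g : Fin N → ℝ) (hg : ∀ i, 0 < g i)
    -- conservation of energy
    (hmass : ω Set.univ = ∑ i, ENNReal.ofReal (g i))
    -- existence of ρ₀ = min h_{bᵢ⁰,pᵢ} with M_{T(ρ₀)}({pᵢ}) ≤ gᵢ for i ≥ 2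
    (b0 : Fin N → ℝ) (hb0 : ∀ i, α (p i) < (b0 i : EReal) ∧ (b0 i : EReal) < β (p i))
    (ρ0 : C(X, ℝ)) (hρ0 : ∀ x, ρ0 x = ⨅ i, h (b0 i) (p i) x)
    (hρ0small : ∀ i : Fin N, i ≠ 0 → ω (SVPreimage (T ρ0) {p i}) ≤ ENNReal.ofReal (g i)) :
    ∃ b : Fin N → ℝ, b 0 = b0 0 ∧
      (∀ i, α (p i) < (b i : EReal) ∧ (b i : EReal) < β (p i)) ∧
      ∃ ρ : C(X, ℝ), (∀ x, ρ x = ⨅ i, h (b i) (p i) x) ∧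
        ∀ E : Set Y, MeasurableSet E →
          ω (SVPreimage (T ρ) E) = ∑ i, E.indicator (fun _ => ENNReal.ofReal (g i)) (p i) :=
  stmt2_general ω F T α β h hFpos hA1 hTCs hTcont hA2 hA3mem hA3a hA3b hA3c hA3d p hp g hg hmass b0
    hb0 ρ0 hρ0 hρ0small
end

section
/- In the T-concave setting with (A3), assume additionally that X is connected, that ω(E) > 0 for every nonempty open set E ⊆ X, and that (A3)(b) is strengthened to h_{t,y₀}(x) < h_{s,y₀}(x) for all x whenever t < s. Let ρ = min_{1≤i≤N} h_{bᵢ,pᵢ} and ρ* = min_{1≤i≤N} h_{bᵢ*,pᵢ} both satisfy M_{T(ρ)} = M_{T(ρ*)} = Σᵢ gᵢ δ_{pᵢ} with g₁,…,g_N > 0 and p₁,…,p_N ∈ Y distinct. Then: (a) if b₁* ≤ b₁ then bᵢ* ≤ bᵢ for all 1 ≤ i ≤ N, and if b₁* = b₁ then bᵢ* = bᵢ for all i; (b) if ρ(x₀) = ρ*(x₀) for some x₀ ∈ X then ρ = ρ* on X. -/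
/-!
Write `Aᵢ = {ρ = h_{bᵢ,pᵢ}}` and `Aᵢ* = {ρ* = h_{bᵢ*,pᵢ}}`. By (A2), `pᵢ ∈ T(ρ)(x)` on `Aᵢ`, so
`ω(Aᵢ) ≤ gᵢ`; as the `Aᵢ` cover `X` and `ω(X) = ∑ gᵢ`, every union of cells `⋃_{i∈S} Aᵢ` has
mass at least `∑_{i∈S} gᵢ`. Let `S = {i : bᵢ* < bᵢ}`. The open set `W = {ρ* < ρ}` contains the
closed set `⋃_{i∈S} Aᵢ` and is contained in `⋃_{i∈S} Aᵢ*`, so both have the same mass and, `ω`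
charging open sets, they coincide. Hence `W` is clopen, and connectedness of `X` forces `S = ∅`
or `S` to be everything: either `b ≤ b*` or `b* < b` componentwise, which gives (a), and in the
second case `ρ* < ρ` everywhere, which gives (b).
-/

open Filter MeasureTheory Topology

open Set
open scoped ENNReal

section Envelope

variable {X ι : Type*} [MeasurableSpace X] {ω : Measure X} [Fintype ι]

/-- For a solution `ρ = min_i h_{bᵢ,pᵢ}`, the cell `{ρ = h_{bᵢ,pᵢ}}` is where `T(ρ)` hits `pᵢ`,
so its mass is bounded by `gᵢ`. -/
structure IsBalancedEnvelope (ω : Measure X) (m : ι → ℝ≥0∞) (u : ι → X → ℝ) (σ : X → ℝ) :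
    Prop where
  eq_iInf : ∀ x, σ x = ⨅ i, u i x
  measure_cell_le : ∀ i, ω {x | σ x = u i x} ≤ m i
  measure_univ : ω univ = ∑ i, m i

namespace IsBalancedEnvelope

variable {m : ι → ℝ≥0∞} {u : ι → X → ℝ} {σ : X → ℝ}

theorem le_apply (hσ : IsBalancedEnvelope ω m u σ) (i : ι) (x : X) : σ x ≤ u i x :=
  hσ.eq_iInf x ▸ ciInf_le (Finite.bddBelow_range _) i

theorem exists_eq [Nonempty ι] (hσ : IsBalancedEnvelope ω m u σ) (x : X) :
    ∃ i, σ x = u i x :=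
  let ⟨i, hi⟩ := exists_eq_ciInf_of_finite (f := fun i => u i x)
  ⟨i, (hσ.eq_iInf x).trans hi.symm⟩

/-- The cells cover `X`, so a family of cells carries at least its share of the total mass. -/
theorem sum_le_measure_biUnion [Nonempty ι] [IsFiniteMeasure ω]
    (hσ : IsBalancedEnvelope ω m u σ) (s : Finset ι) :
    ∑ i ∈ s, m i ≤ ω (⋃ i ∈ s, {x | σ x = u i x}) := by
  classical
  have hcover : univ ⊆ (⋃ i ∈ s, {x | σ x = u i x}) ∪ ⋃ i ∈ sᶜ, {x | σ x = u i x} := by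
    intro x _
    obtain ⟨i, hi⟩ := hσ.exists_eq x
    by_cases his : i ∈ s
    · exact Or.inl (mem_biUnion his hi)
    · exact Or.inr (mem_biUnion (Finset.mem_compl.mpr his) hi)
  have hrest_ne_top : ∑ i ∈ sᶜ, m i ≠ ⊤ :=
    ne_top_of_le_ne_top (hσ.measure_univ ▸ measure_ne_top ω univ)
      (Finset.sum_le_sum_of_subset (Finset.subset_univ _))
  refine (ENNReal.add_le_add_iff_right hrest_ne_top).mp ?_
  calc ∑ i ∈ s, m i + ∑ i ∈ sᶜ, m i = ω univ := by
        rw [Finset.sum_add_sum_compl, hσ.measure_univ]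
    _ ≤ ω (⋃ i ∈ s, {x | σ x = u i x}) + ω (⋃ i ∈ sᶜ, {x | σ x = u i x}) :=
        (measure_mono hcover).trans (measure_union_le _ _)
    _ ≤ ω (⋃ i ∈ s, {x | σ x = u i x}) + ∑ i ∈ sᶜ, m i := by
        gcongr
        exact (measure_biUnion_finset_le _ _).trans
          (Finset.sum_le_sum fun i _ => hσ.measure_cell_le i)

theorem nonempty_cell [Nonempty ι] [IsFiniteMeasure ω] (hσ : IsBalancedEnvelope ω m u σ)
    {i : ι} (hi : 0 < m i) : {x | σ x = u i x}.Nonempty := by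
  refine nonempty_of_measure_ne_zero (μ := ω) (hi.trans_le ?_).ne'
  simpa using hσ.sum_le_measure_biUnion {i}

theorem lt_apply_of_forall_lt [Nonempty ι] {v : ι → X → ℝ} {τ : X → ℝ}
    (hσ : IsBalancedEnvelope ω m u σ) (hτ : IsBalancedEnvelope ω m v τ)
    (hvu : ∀ i x, v i x < u i x) (x : X) : τ x < σ x :=
  let ⟨i, hi⟩ := hσ.exists_eq x
  (hτ.le_apply i x).trans_lt (hi ▸ hvu i x)

end IsBalancedEnvelope

theorem subset_of_isOpen_of_isClosed_of_measure_le [TopologicalSpace X] [OpensMeasurableSpace X]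
    [IsFiniteMeasure ω] [ω.IsOpenPosMeasure] {W U : Set X} (hW : IsOpen W) (hU : IsClosed U)
    (hUW : U ⊆ W) (hmeas : ω W ≤ ω U) : W ⊆ U := by
  have hnull : ω (W \ U) = 0 := by
    rw [measure_sdiff hUW hU.measurableSet.nullMeasurableSet (measure_ne_top ω U)]
    exact tsub_eq_zero_of_le hmeas
  exact sdiff_eq_empty.mp (((hW.sdiff hU).measure_eq_zero_iff ω).mp hnull)

theorem IsBalancedEnvelope.eq_empty_or_eq_univ [Nonempty ι] [TopologicalSpace X]
    [OpensMeasurableSpace X] [ConnectedSpace X] [IsFiniteMeasure ω] [ω.IsOpenPosMeasure]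
    {m : ι → ℝ≥0∞} (hm : ∀ i, 0 < m i) {u v : ι → X → ℝ} {σ τ : X → ℝ}
    (hσ : IsBalancedEnvelope ω m u σ) (hτ : IsBalancedEnvelope ω m v τ)
    (hσc : Continuous σ) (hτc : Continuous τ) (huc : ∀ i, Continuous (u i))
    (S : Finset ι) (hlt : ∀ i ∈ S, ∀ x, v i x < u i x) (hle : ∀ i ∉ S, ∀ x, u i x ≤ v i x) :
    S = ∅ ∨ S = Finset.univ := by
  set W := {x | τ x < σ x}
  set U := ⋃ i ∈ S, {x | σ x = u i x}
  have hUW : U ⊆ W := by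
    intro x hx
    obtain ⟨i, hiS, hxi⟩ := mem_iUnion₂.mp hx
    exact (hτ.le_apply i x).trans_lt (hxi ▸ hlt i hiS x)
  have hnotW : ∀ i ∉ S, ∀ x, τ x = v i x → x ∉ W := fun i hiS x hxi hxW =>
    (hσ.le_apply i x |>.trans (hle i hiS x) |>.trans_eq hxi.symm).not_gt hxW
  have hWτ : W ⊆ ⋃ i ∈ S, {x | τ x = v i x} := by
    intro x hxW
    obtain ⟨i, hxi⟩ := hτ.exists_eq x
    by_cases hiS : i ∈ S
    · exact mem_biUnion hiS hxi
    · exact absurd hxW (hnotW i hiS x hxi)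
  have hUclosed : IsClosed U :=
    S.finite_toSet.isClosed_biUnion fun i _ => isClosed_eq hσc (huc i)
  have hWopen : IsOpen W := isOpen_lt hτc hσc
  have hWU : W = U := by
    refine (subset_of_isOpen_of_isClosed_of_measure_le (ω := ω) hWopen hUclosed hUW ?_).antisymm
      hUW
    calc ω W ≤ ∑ i ∈ S, m i := (measure_mono hWτ).trans <| (measure_biUnion_finset_le _ _).trans
          (Finset.sum_le_sum fun i _ => hτ.measure_cell_le i)
      _ ≤ ω U := hσ.sum_le_measure_biUnion S
  rcases isClopen_iff.mp ⟨hWU ▸ hUclosed, hWopen⟩ with hW | hW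
  · left
    refine Finset.eq_empty_of_forall_notMem fun i hiS => ?_
    obtain ⟨x, hx⟩ := hσ.nonempty_cell (hm i)
    exact hW.subset (hUW (mem_biUnion hiS hx))
  · right
    refine Finset.eq_univ_of_forall fun i => ?_
    by_contra hiS
    obtain ⟨x, hx⟩ := hτ.nonempty_cell (hm i)
    exact hnotW i hiS x hx (hW ▸ mem_univ x)

end Envelope

section Concave

variable {X Y ι : Type*} [TopologicalSpace X] {F : Set C(X, ℝ)} {T : C(X, ℝ) → X → Set Y}

theorem mem_of_forall_eq_iInf [Fintype ι] [Nonempty ι]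
    (hA1 : ∀ f₁ ∈ F, ∀ f₂ ∈ F, f₁ ⊓ f₂ ∈ F) {u : ι → C(X, ℝ)} (hu : ∀ i, u i ∈ F)
    {σ : C(X, ℝ)} (hσ : ∀ x, σ x = ⨅ i, u i x) : σ ∈ F := by
  have hσ_inf : σ = Finset.univ.inf' Finset.univ_nonempty u := by
    ext x
    rw [hσ, ContinuousMap.inf'_apply, Finset.inf'_univ_eq_ciInf]
  exact hσ_inf ▸ Finset.inf'_mem F hA1 _ _ _ fun i _ => hu i

theorem mem_apply_of_le_of_eq
    (hA2 : ∀ φ₁ ∈ F, ∀ φ₂ ∈ F, ∀ x₀ : X, φ₁ x₀ ≤ φ₂ x₀ → T φ₁ x₀ ⊆ T (φ₁ ⊓ φ₂) x₀)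
    {φ σ : C(X, ℝ)} (hφ : φ ∈ F) (hσ : σ ∈ F) (hle : σ ≤ φ) {x : X} (heq : σ x = φ x) {y : Y}
    (hy : y ∈ T φ x) : y ∈ T σ x := by
  simpa only [inf_eq_right.mpr hle] using hA2 φ hφ σ hσ x heq.ge hy

theorem sum_indicator_singleton_of_injective {M : Type*} [AddCommMonoid M] [Fintype ι]
    {p : ι → Y} (hp : Function.Injective p) (m : ι → M) (j : ι) :
    ∑ i, ({p j} : Set Y).indicator (fun _ => m i) (p i) = m j := by
  classical
  simp [indicator_apply, hp.eq_iff]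

/-- The cell of `pⱼ` lies in `T(σ)⁻¹{pⱼ}`, because (A2) carries `pⱼ ∈ T(h_{cⱼ,pⱼ})(x)` over to
`T(σ)(x)` wherever `σ(x) = h_{cⱼ,pⱼ}(x)`. -/
theorem isBalancedEnvelope_of_measure_eq [MeasurableSpace X] [MeasurableSpace Y]
    [MeasurableSingletonClass Y] {ω : Measure X}
    [Fintype ι] [Nonempty ι] (hA1 : ∀ f₁ ∈ F, ∀ f₂ ∈ F, f₁ ⊓ f₂ ∈ F)
    (hA2 : ∀ φ₁ ∈ F, ∀ φ₂ ∈ F, ∀ x₀ : X, φ₁ x₀ ≤ φ₂ x₀ → T φ₁ x₀ ⊆ T (φ₁ ⊓ φ₂) x₀)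
    {α β : Y → EReal} {h : ℝ → Y → C(X, ℝ)}
    (hA3mem : ∀ (y : Y) (t : ℝ), α y < (t : EReal) → (t : EReal) < β y → h t y ∈ F)
    (hA3a : ∀ (y : Y) (t : ℝ), α y < (t : EReal) → (t : EReal) < β y → ∀ x : X, y ∈ T (h t y) x)
    {p : ι → Y} (hp : Function.Injective p) {m : ι → ℝ≥0∞} {c : ι → ℝ}
    (hc : ∀ i, α (p i) < (c i : EReal) ∧ (c i : EReal) < β (p i))
    {σ : C(X, ℝ)} (hσ : ∀ x, σ x = ⨅ i, h (c i) (p i) x)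
    (hM : ∀ E : Set Y, MeasurableSet E →
      ω (SVPreimage (T σ) E) = ∑ i, E.indicator (fun _ => m i) (p i)) :
    IsBalancedEnvelope ω m (fun i => h (c i) (p i)) σ := by
  have hmem : ∀ i, h (c i) (p i) ∈ F := fun i => hA3mem _ _ (hc i).1 (hc i).2
  have hσF : σ ∈ F := mem_of_forall_eq_iInf hA1 hmem hσ
  have hcell : ∀ i, {x | σ x = h (c i) (p i) x} ⊆ SVPreimage (T σ) {p i} := fun i x hx =>
    ⟨p i, mem_apply_of_le_of_eq hA2 (hmem i) hσF
      (fun x => (hσ x).trans_le (ciInf_le (Finite.bddBelow_range _) i)) hx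
      (hA3a _ _ (hc i).1 (hc i).2 x), rfl⟩
  have hcover : SVPreimage (T σ) univ = univ := eq_univ_of_forall fun x =>
    let ⟨i, hi⟩ := exists_eq_ciInf_of_finite (f := fun i => h (c i) (p i) x)
    (hcell i ((hσ x).trans hi.symm)).mono (inter_subset_inter_right _ (subset_univ _))
  refine ⟨hσ, fun i => ?_, ?_⟩
  · calc ω {x | σ x = h (c i) (p i) x} ≤ ω (SVPreimage (T σ) {p i}) := measure_mono (hcell i)
      _ = m i := by rw [hM _ (measurableSet_singleton _), sum_indicator_singleton_of_injective hp]
  · simpa only [hcover, indicator_univ] using hM univ MeasurableSet.univ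

theorem forall_le_or_forall_lt_of_isBalancedEnvelope [MeasurableSpace X] [OpensMeasurableSpace X]
    [ConnectedSpace X]
    {ω : Measure X} [IsFiniteMeasure ω] [ω.IsOpenPosMeasure] [Fintype ι] [Nonempty ι]
    {α β : Y → EReal} {h : ℝ → Y → C(X, ℝ)}
    (hA3b : ∀ (y : Y) (t s : ℝ), α y < (t : EReal) → (s : EReal) < β y → t < s →
      ∀ x, h t y x < h s y x)
    {m : ι → ℝ≥0∞} (hm : ∀ i, 0 < m i) {p : ι → Y} {b bs : ι → ℝ}
    (hb : ∀ i, α (p i) < (b i : EReal) ∧ (b i : EReal) < β (p i))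
    (hbs : ∀ i, α (p i) < (bs i : EReal) ∧ (bs i : EReal) < β (p i)) {ρ ρs : C(X, ℝ)}
    (hρ : IsBalancedEnvelope ω m (fun i => h (b i) (p i)) ρ)
    (hρs : IsBalancedEnvelope ω m (fun i => h (bs i) (p i)) ρs) :
    (∀ i, b i ≤ bs i) ∨ ∀ i, bs i < b i := by
  classical
  have hle : ∀ i, b i ≤ bs i → ∀ x, h (b i) (p i) x ≤ h (bs i) (p i) x := fun i hi x =>
    hi.eq_or_lt.elim (fun e => e ▸ le_rfl) fun hlt => (hA3b _ _ _ (hb i).1 (hbs i).2 hlt x).le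
  rcases hρ.eq_empty_or_eq_univ hm hρs ρ.continuous ρs.continuous (fun i => (h _ _).continuous)
    (Finset.univ.filter fun i => bs i < b i)
    (fun i hi x => hA3b _ _ _ (hbs i).1 (hb i).2 (Finset.mem_filter.mp hi).2 x)
    (fun i hi => hle i (by simpa using hi)) with hS | hS
  · exact Or.inl fun i => not_lt.mp fun hi => by
      simpa [hi] using Finset.eq_empty_iff_forall_notMem.mp hS i
  · exact Or.inr fun i => by simpa using Finset.eq_univ_iff_forall.mp hS i

end Concave

theorem stmt3_general {X Y : Type*} [MetricSpace X] [MetricSpace Y]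
    [MeasurableSpace X] [BorelSpace X] [MeasurableSpace Y] [BorelSpace Y]
    (ω : Measure X) [IsFiniteMeasure ω]
    -- X is connected and ω is positive on nonempty open sets
    [ConnectedSpace X]
    (hωpos : ∀ U : Set X, IsOpen U → U.Nonempty → 0 < ω U)
    (F : Set C(X, ℝ)) (T : C(X, ℝ) → X → Set Y)
    (α β : Y → EReal) (h : ℝ → Y → C(X, ℝ))
    -- (A1)
    (hA1 : ∀ f₁ ∈ F, ∀ f₂ ∈ F, f₁ ⊓ f₂ ∈ F)
    -- (A2)
    (hA2 : ∀ φ₁ ∈ F, ∀ φ₂ ∈ F, ∀ x₀ : X, φ₁ x₀ ≤ φ₂ x₀ → T φ₁ x₀ ⊆ T (φ₁ ⊓ φ₂) x₀)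
    -- (A3) with (b) strengthened to strict monotonicity
    (hA3mem : ∀ (y : Y) (t : ℝ), α y < (t : EReal) → (t : EReal) < β y → h t y ∈ F)
    (hA3a : ∀ (y : Y) (t : ℝ), α y < (t : EReal) → (t : EReal) < β y → ∀ x : X, y ∈ T (h t y) x)
    (hA3b : ∀ (y : Y) (t s : ℝ), α y < (t : EReal) → (s : EReal) < β y → t < s →
      ∀ x, h t y x < h s y x)
    -- the data
    {N : ℕ} [NeZero N]
    (p : Fin N → Y) (hp : Function.Injective p)
    (g : Fin N → ℝ) (hg : ∀ i, 0 < g i)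
    -- two solutions ρ = min h_{bᵢ,pᵢ} and ρ* = min h_{bᵢ*,pᵢ} as in Theorem 2.5
    (b bs : Fin N → ℝ)
    (hb : ∀ i, α (p i) < (b i : EReal) ∧ (b i : EReal) < β (p i))
    (hbs : ∀ i, α (p i) < (bs i : EReal) ∧ (bs i : EReal) < β (p i))
    (ρ ρs : C(X, ℝ))
    (hρ : ∀ x, ρ x = ⨅ i, h (b i) (p i) x)
    (hρs : ∀ x, ρs x = ⨅ i, h (bs i) (p i) x)
    (hMρ : ∀ E : Set Y, MeasurableSet E →
      ω (SVPreimage (T ρ) E) = ∑ i, E.indicator (fun _ => ENNReal.ofReal (g i)) (p i))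
    (hMρs : ∀ E : Set Y, MeasurableSet E →
      ω (SVPreimage (T ρs) E) = ∑ i, E.indicator (fun _ => ENNReal.ofReal (g i)) (p i)) :
    -- (a)
    ((bs 0 ≤ b 0 → ∀ i, bs i ≤ b i) ∧ (bs 0 = b 0 → ∀ i, bs i = b i)) ∧
    -- (b)
    ((∃ x₀ : X, ρ x₀ = ρs x₀) → ∀ x : X, ρ x = ρs x) := by
  have : ω.IsOpenPosMeasure := ⟨fun U hU hne => (hωpos U hU hne).ne'⟩
  have hm : ∀ i, 0 < ENNReal.ofReal (g i) := fun i => ENNReal.ofReal_pos.mpr (hg i)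
  have env := isBalancedEnvelope_of_measure_eq hA1 hA2 hA3mem hA3a hp hb hρ hMρ
  have envs := isBalancedEnvelope_of_measure_eq hA1 hA2 hA3mem hA3a hp hbs hρs hMρs
  have hcomp := forall_le_or_forall_lt_of_isBalancedEnvelope hA3b hm hb hbs env envs
  have hcomp' := forall_le_or_forall_lt_of_isBalancedEnvelope hA3b hm hbs hb envs env
  have hbs_le (h0 : bs 0 ≤ b 0) : ∀ i, bs i ≤ b i :=
    hcomp'.resolve_right fun hlt => (hlt 0).not_ge h0
  have hb_le (h0 : b 0 ≤ bs 0) : ∀ i, b i ≤ bs i :=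
    hcomp.resolve_right fun hlt => (hlt 0).not_ge h0
  refine ⟨⟨hbs_le, fun h0 i => (hbs_le h0.le i).antisymm (hb_le h0.ge i)⟩, ?_⟩
  rintro ⟨x₀, hx₀⟩ x
  have hb_le_bs : ∀ i, b i ≤ bs i := hcomp.resolve_right fun hlt =>
    (env.lt_apply_of_forall_lt envs (fun i => hA3b _ _ _ (hbs i).1 (hb i).2 (hlt i)) x₀).ne' hx₀
  have hbs_le_b : ∀ i, bs i ≤ b i := hcomp'.resolve_right fun hlt =>
    (envs.lt_apply_of_forall_lt env (fun i => hA3b _ _ _ (hb i).1 (hbs i).2 (hlt i)) x₀).ne hx₀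
  have hb_eq : b = bs := funext fun i => (hb_le_bs i).antisymm (hbs_le_b i)
  rw [hρ, hρs, hb_eq]

/-- Theorem 2.7 (comparison/uniqueness, concave case). -/
theorem stmt3 {X Y : Type*} [MetricSpace X] [CompactSpace X] [MetricSpace Y] [CompactSpace Y]
    [MeasurableSpace X] [BorelSpace X] [MeasurableSpace Y] [BorelSpace Y]
    (ω : Measure X) [IsFiniteMeasure ω]
    -- X is connected and ω is positive on nonempty open sets
    [ConnectedSpace X]
    (hωpos : ∀ U : Set X, IsOpen U → U.Nonempty → 0 < ω U)
    (F : Set C(X, ℝ)) (T : C(X, ℝ) → X → Set Y)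
    (α β : Y → EReal) (h : ℝ → Y → C(X, ℝ))
    -- F ⊆ C⁺(X)
    (hFpos : ∀ f ∈ F, ∀ x, 0 < f x)
    -- (A1)
    (hA1 : ∀ f₁ ∈ F, ∀ f₂ ∈ F, f₁ ⊓ f₂ ∈ F)
    -- T maps F into C_s(X,Y)
    (hTCs : ∀ f ∈ F, IsCs ω (T f))
    -- T is continuous at each φ ∈ F
    (hTcont : ∀ φ ∈ F, TContinuousAt F T φ)
    -- (A2)
    (hA2 : ∀ φ₁ ∈ F, ∀ φ₂ ∈ F, ∀ x₀ : X, φ₁ x₀ ≤ φ₂ x₀ → T φ₁ x₀ ⊆ T (φ₁ ⊓ φ₂) x₀)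
    -- (A3) with (b) strengthened to strict monotonicity
    (hA3mem : ∀ (y : Y) (t : ℝ), α y < (t : EReal) → (t : EReal) < β y → h t y ∈ F)
    (hA3a : ∀ (y : Y) (t : ℝ), α y < (t : EReal) → (t : EReal) < β y → ∀ x : X, y ∈ T (h t y) x)
    (hA3b : ∀ (y : Y) (t s : ℝ), α y < (t : EReal) → (s : EReal) < β y → t < s →
      ∀ x, h t y x < h s y x)
    (hA3c : ∀ (y : Y), ∀ ε : ℝ, 0 < ε → ∃ t₀ : ℝ, α y < (t₀ : EReal) ∧ (t₀ : EReal) < β y ∧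
      ∀ t : ℝ, α y < (t : EReal) → t ≤ t₀ → ∀ x, h t y x < ε)
    (hA3d : ∀ (y : Y) (t : ℝ), α y < (t : EReal) → (t : EReal) < β y →
      ∀ ε : ℝ, 0 < ε → ∃ δ : ℝ, 0 < δ ∧ ∀ t' : ℝ, α y < (t' : EReal) → (t' : EReal) < β y →
        |t' - t| < δ → ∀ x, |h t' y x - h t y x| ≤ ε)
    -- the data
    {N : ℕ} [NeZero N] (hN : 2 ≤ N)
    (p : Fin N → Y) (hp : Function.Injective p)
    (g : Fin N → ℝ) (hg : ∀ i, 0 < g i)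
    -- two solutions ρ = min h_{bᵢ,pᵢ} and ρ* = min h_{bᵢ*,pᵢ} as in Theorem 2.5
    (b bs : Fin N → ℝ)
    (hb : ∀ i, α (p i) < (b i : EReal) ∧ (b i : EReal) < β (p i))
    (hbs : ∀ i, α (p i) < (bs i : EReal) ∧ (bs i : EReal) < β (p i))
    (ρ ρs : C(X, ℝ))
    (hρ : ∀ x, ρ x = ⨅ i, h (b i) (p i) x)
    (hρs : ∀ x, ρs x = ⨅ i, h (bs i) (p i) x)
    (hMρ : ∀ E : Set Y, MeasurableSet E →
      ω (SVPreimage (T ρ) E) = ∑ i, E.indicator (fun _ => ENNReal.ofReal (g i)) (p i))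
    (hMρs : ∀ E : Set Y, MeasurableSet E →
      ω (SVPreimage (T ρs) E) = ∑ i, E.indicator (fun _ => ENNReal.ofReal (g i)) (p i)) :
    -- (a)
    ((bs 0 ≤ b 0 → ∀ i, bs i ≤ b i) ∧ (bs 0 = b 0 → ∀ i, bs i = b i)) ∧
    -- (b)
    ((∃ x₀ : X, ρ x₀ = ρs x₀) → ∀ x : X, ρ x = ρs x) :=
  stmt3_general ω hωpos F T α β h hA1 hA2 hA3mem hA3a hA3b p hp g hg b bs hb hbs ρ ρs hρ hρs hMρ
    hMρs
end

section
/- In the T-concave setting with (A3), let μ_l be a sequence of finitely supported (discrete) Radon measures on Y converging weakly to a Radon measure μ, with μ_l(Y) = ω(X) for all l. For each l let ρ_l ∈ F be of the form ρ_l = min_{1≤i≤N_l} h_{bᵢˡ,pᵢˡ} and satisfy M_{T(ρ_l)} = μ_l. Assume there exists R₀ > 0 with R₀ in the range of ρ_l for every l, and: (i) for each R₁ > 0 there is C_{R₁} > 0 such that whenever R₁ is in the range of some h_{t,y}, then C_{R₁}⁻¹ ≤ h_{t,y} ≤ C_{R₁} on X; (ii) for any C₁ > C₀ > 0 the family {f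 ∈ F : C₀ ≤ f ≤ C₁ on X} is compact in C(X). Then there exists ρ ∈ F with M_{T(ρ)} = μ. -/
open Filter MeasureTheory Topology

/-!
By (i) applied at the level `R₀`, every branch `h_{b,p}` of `ρ_l` is bounded below by `C⁻¹`:
lowering the parameter pushes it below `R₀` (A3c), so by the intermediate value theorem in the
parameter some `h_{t,p} ≤ h_{b,p}` takes the value `R₀`. The branch realising the minimum `R₀` is
bounded above by `C`. Hence all `ρ_l` lie in a compact set given by (ii), and a subsequence
converges uniformly to some `ρ ∈ F`. Writing `M_{T(ρ_l)}` and `M_{T(ρ)}` as push-forwards of `ω`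
under a.e. single-valued selections, continuity of `T` gives a.e. convergence of the selections,
and dominated convergence identifies `M_{T(ρ)}` with the weak limit `μ`.
-/

lemma mem_Icc_of_forall_eq_ciInf {ι X : Type*} [Finite ι] [Nonempty ι] {g : ι → X → ℝ}
    {ρ : X → ℝ} (hρ : ∀ x, ρ x = ⨅ i, g i x) {x₀ : X} {R L U : ℝ} (hx₀ : ρ x₀ = R)
    (hlow : ∀ i, R ≤ g i x₀ → ∀ x, L ≤ g i x) (hup : ∀ i, g i x₀ = R → ∀ x, g i x ≤ U)
    (x : X) : ρ x ∈ Set.Icc L U := by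
  have hR : ∀ i, R ≤ g i x₀ := fun i =>
    hx₀ ▸ (hρ x₀).symm ▸ ciInf_le (Set.finite_range _).bddBelow i
  obtain ⟨i₀, hi₀⟩ := exists_eq_ciInf_of_finite (f := fun i => g i x₀)
  rw [hρ x]
  exact ⟨le_ciInf fun i => hlow i (hR i) x, (ciInf_le (Set.finite_range _).bddBelow i₀).trans
    (hup i₀ (hi₀.trans ((hρ x₀).symm.trans hx₀)) x)⟩

section Parameter

variable {X Y : Type*} [TopologicalSpace X] {α β : Y → EReal} {h : ℝ → Y → C(X, ℝ)}

lemma continuousOn_param_apply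
    (hcont : ∀ (y : Y) (t : ℝ), α y < (t : EReal) → (t : EReal) < β y →
      ∀ ε : ℝ, 0 < ε → ∃ δ : ℝ, 0 < δ ∧ ∀ t' : ℝ, α y < (t' : EReal) → (t' : EReal) < β y →
        |t' - t| < δ → ∀ x, |h t' y x - h t y x| ≤ ε)
    (y : Y) (x : X) :
    ContinuousOn (fun t : ℝ => h t y x) {t : ℝ | α y < t ∧ (t : EReal) < β y} := by
  rintro t ⟨htα, htβ⟩
  refine Metric.continuousWithinAt_iff.2 fun ε hε => ?_
  obtain ⟨δ, hδ, hδt⟩ := hcont y t htα htβ (ε / 2) (half_pos hε)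
  exact ⟨δ, hδ, fun {t'} ⟨ht'α, ht'β⟩ hdist =>
    (hδt t' ht'α ht'β hdist x).trans_lt (half_lt_self hε)⟩

lemma inv_le_param_apply_of_le
    (hmono : ∀ (y : Y) (t s : ℝ), α y < (t : EReal) → (s : EReal) < β y → t ≤ s →
      ∀ x, h t y x ≤ h s y x)
    (hzero : ∀ (y : Y), ∀ ε : ℝ, 0 < ε → ∃ t₀ : ℝ, α y < (t₀ : EReal) ∧ (t₀ : EReal) < β y ∧
      ∀ t : ℝ, α y < (t : EReal) → t ≤ t₀ → ∀ x, h t y x < ε)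
    (hcont : ∀ (y : Y) (t : ℝ), α y < (t : EReal) → (t : EReal) < β y →
      ∀ ε : ℝ, 0 < ε → ∃ δ : ℝ, 0 < δ ∧ ∀ t' : ℝ, α y < (t' : EReal) → (t' : EReal) < β y →
        |t' - t| < δ → ∀ x, |h t' y x - h t y x| ≤ ε)
    {R C : ℝ} (hR : 0 < R)
    (hC : ∀ (y : Y) (t : ℝ), α y < (t : EReal) → (t : EReal) < β y → (∃ x, h t y x = R) →
      ∀ x, C⁻¹ ≤ h t y x ∧ h t y x ≤ C)
    {y : Y} {b : ℝ} (hbα : α y < b) (hbβ : (b : EReal) < β y) {x₀ : X} (hRb : R ≤ h b y x₀)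
    (x : X) : C⁻¹ ≤ h b y x := by
  obtain ⟨t₀, ht₀α, -, ht₀⟩ := hzero y R hR
  have ht₀b : t₀ ≤ b := le_of_not_ge fun hbt₀ => (ht₀ b hbα hbt₀ x₀).not_ge hRb
  have hIcc : Set.Icc t₀ b ⊆ {t : ℝ | α y < t ∧ (t : EReal) < β y} := fun t ht =>
    ⟨ht₀α.trans_le (EReal.coe_le_coe_iff.2 ht.1), (EReal.coe_le_coe_iff.2 ht.2).trans_lt hbβ⟩
  obtain ⟨t, ht, htR⟩ := intermediate_value_Icc ht₀b
    ((continuousOn_param_apply hcont y x₀).mono hIcc) ⟨(ht₀ t₀ ht₀α le_rfl x₀).le, hRb⟩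
  calc C⁻¹ ≤ h t y x := (hC y t (hIcc ht).1 (hIcc ht).2 ⟨x₀, htR⟩ x).1
    _ ≤ h b y x := hmono y t b (hIcc ht).1 hbβ ht.2 x

end Parameter

lemma measure_SVPreimage_eq_map {X Y : Type*} [MeasurableSpace X] [MeasurableSpace Y]
    {ω : Measure X} {Φ : X → Set Y} {u : X → Y} (hsingle : ∀ᵐ x ∂ω, Φ x = {u x})
    (hu : AEMeasurable u ω) {E : Set Y} (hE : MeasurableSet E) :
    ω (SVPreimage Φ E) = ω.map u E := by
  rw [Measure.map_apply_of_aemeasurable hu hE]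
  refine measure_congr (hsingle.mono fun x hx => ?_)
  change (Φ x ∩ E).Nonempty = (u x ∈ E)
  rw [hx, Set.singleton_inter_nonempty]

section SetValued

variable {X Y : Type*} [TopologicalSpace X] [TopologicalSpace Y]

lemma SVContinuousAt.tendsto_of_eq_singleton {Φ : X → Set Y} {x₀ : X} {y₀ : Y}
    (hΦ : SVContinuousAt Φ x₀) (hx₀ : Φ x₀ = {y₀}) {xk : ℕ → X} {yk : ℕ → Y}
    (hxk : Tendsto xk atTop (𝓝 x₀)) (hyk : ∀ k, yk k ∈ Φ (xk k)) :
    Tendsto yk atTop (𝓝 y₀) := by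
  refine tendsto_of_subseq_tendsto fun ns hns => ?_
  obtain ⟨s, y, -, hy, hlim⟩ := hΦ (xk ∘ ns) (yk ∘ ns) (hxk.comp hns) fun k => hyk _
  rw [hx₀, Set.mem_singleton_iff] at hy
  exact ⟨s, hy ▸ hlim⟩

lemma SVContinuousAt.continuousAt_of_eq_singleton [FirstCountableTopology X] {Φ : X → Set Y}
    {u : X → Y} {x₀ : X} (hΦ : SVContinuousAt Φ x₀) (hx₀ : Φ x₀ = {u x₀})
    (hu : ∀ x, u x ∈ Φ x) : ContinuousAt u x₀ :=
  tendsto_nhds_iff_seq_tendsto.2 fun _ hxk => hΦ.tendsto_of_eq_singleton hx₀ hxk fun _ => hu _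

lemma TContinuousAt.tendsto_of_eq_singleton [CompactSpace X] {F : Set C(X, ℝ)}
    {T : C(X, ℝ) → X → Set Y} {φ : C(X, ℝ)} {x₀ : X} {y₀ : Y} (hT : TContinuousAt F T φ)
    (hx₀ : T φ x₀ = {y₀}) {φs : ℕ → C(X, ℝ)} (hφs : ∀ j, φs j ∈ F)
    (hlim : Tendsto φs atTop (𝓝 φ)) {ys : ℕ → Y} (hys : ∀ j, ys j ∈ T (φs j) x₀) :
    Tendsto ys atTop (𝓝 y₀) := by
  refine tendsto_of_subseq_tendsto fun ns hns => ?_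
  obtain ⟨s, y, -, hy, hlim'⟩ := hT (φs ∘ ns) (fun j => hφs _)
    (ContinuousMap.tendsto_iff_tendstoUniformly.1 (hlim.comp hns)) x₀ (ys ∘ ns) fun j => hys _
  rw [hx₀, Set.mem_singleton_iff] at hy
  exact ⟨s, hy ▸ hlim'⟩

lemma exists_aemeasurable_selection [FirstCountableTopology X] [MeasurableSpace X]
    [OpensMeasurableSpace X] [MeasurableSpace Y] [BorelSpace Y] {ω : Measure X} {Φ : X → Set Y}
    (hne : ∀ x, (Φ x).Nonempty)
    (hcont : ∀ x, SVContinuousAt Φ x) (hsv : ∀ᵐ x ∂ω, ∃ y, Φ x = {y}) :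
    ∃ u : X → Y, (∀ x, u x ∈ Φ x) ∧ (∀ᵐ x ∂ω, Φ x = {u x}) ∧ AEMeasurable u ω := by
  choose u hu using hne
  have hsingle : ∀ᵐ x ∂ω, Φ x = {u x} := hsv.mono fun x ⟨y, hy⟩ => by
    have := hu x
    rw [hy, Set.mem_singleton_iff] at this
    rw [hy, this]
  have hcontOn : ContinuousOn u {x | Φ x = {u x}} := fun x hx =>
    ((hcont x).continuousAt_of_eq_singleton hx hu).continuousWithinAt
  have hmeas := hcontOn.aemeasurable₀ (μ := ω) (.of_compl (.of_null (ae_iff.1 hsingle)))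
  rw [Measure.restrict_eq_self_of_ae_mem (s := {x | Φ x = {u x}}) hsingle] at hmeas
  exact ⟨u, hu, hsingle, hmeas⟩

end SetValued

section Pushforward

variable {X Y : Type*} [MeasurableSpace X] [TopologicalSpace Y] [MeasurableSpace Y]
  [BorelSpace Y] [HasOuterApproxClosed Y]

lemma map_eq_of_tendsto_ae {ω : Measure X} [IsFiniteMeasure ω] {μ : Measure Y}
    [IsFiniteMeasure μ] {v : ℕ → X → Y} {v₀ : X → Y} (hv : ∀ j, AEMeasurable (v j) ω)
    (hv₀ : AEMeasurable v₀ ω) (hlim : ∀ᵐ x ∂ω, Tendsto (fun j => v j x) atTop (𝓝 (v₀ x)))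
    (hweak : ∀ f : C(Y, ℝ),
      Tendsto (fun j => ∫ y, f y ∂(ω.map (v j))) atTop (𝓝 (∫ y, f y ∂μ))) :
    ω.map v₀ = μ := by
  have := ω.isFiniteMeasure_map v₀
  refine ext_of_forall_integral_eq_of_IsFiniteMeasure fun f => ?_
  have hmap : ∀ w : X → Y, AEMeasurable w ω → ∫ y, f y ∂(ω.map w) = ∫ x, f (w x) ∂ω :=
    fun w hw => integral_map hw f.continuous.aestronglyMeasurable
  have hdom : Tendsto (fun j => ∫ x, f (v j x) ∂ω) atTop (𝓝 (∫ x, f (v₀ x) ∂ω)) :=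
    tendsto_integral_of_dominated_convergence (fun _ => ‖f‖)
      (fun j => (f.continuous.measurable.comp_aemeasurable (hv j)).aestronglyMeasurable)
      (integrable_const _) (fun j => .of_forall fun x => f.norm_coe_le_norm _)
      (hlim.mono fun x hx => (f.continuous.tendsto _).comp hx)
  rw [hmap v₀ hv₀]
  refine tendsto_nhds_unique hdom ?_
  simpa only [BoundedContinuousFunction.coe_toContinuousMap, hmap _ (hv _)]
    using hweak f.toContinuousMap

end Pushforward

theorem stmt4_general {X Y : Type*} [MetricSpace X] [CompactSpace X] [MetricSpace Y] [CompactSpace Y]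
    [MeasurableSpace X] [BorelSpace X] [MeasurableSpace Y] [BorelSpace Y]
    (ω : Measure X) [IsFiniteMeasure ω]
    (F : Set C(X, ℝ)) (T : C(X, ℝ) → X → Set Y)
    (α β : Y → EReal) (h : ℝ → Y → C(X, ℝ))
    -- T maps F into C_s(X,Y)
    (hTCs : ∀ f ∈ F, IsCs ω (T f))
    -- T is continuous at each φ ∈ F
    (hTcont : ∀ φ ∈ F, TContinuousAt F T φ)
    -- (A3)
    (hA3b : ∀ (y : Y) (t s : ℝ), α y < (t : EReal) → (s : EReal) < β y → t ≤ s →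
      ∀ x, h t y x ≤ h s y x)
    (hA3c : ∀ (y : Y), ∀ ε : ℝ, 0 < ε → ∃ t₀ : ℝ, α y < (t₀ : EReal) ∧ (t₀ : EReal) < β y ∧
      ∀ t : ℝ, α y < (t : EReal) → t ≤ t₀ → ∀ x, h t y x < ε)
    (hA3d : ∀ (y : Y) (t : ℝ), α y < (t : EReal) → (t : EReal) < β y →
      ∀ ε : ℝ, 0 < ε → ∃ δ : ℝ, 0 < δ ∧ ∀ t' : ℝ, α y < (t' : EReal) → (t' : EReal) < β y →
        |t' - t| < δ → ∀ x, |h t' y x - h t y x| ≤ ε)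
    -- discrete measures μ_l converging weakly to μ with μ_l(Y) = ω(X)
    (μs : ℕ → Measure Y) (μ : Measure Y) [IsFiniteMeasure μ]
    (hweak : ∀ fc : C(Y, ℝ),
      Tendsto (fun l => ∫ y, fc y ∂(μs l)) atTop (nhds (∫ y, fc y ∂μ)))
    -- solutions ρ_l = min_i h_{bᵢˡ,pᵢˡ} of M_{T(ρ_l)} = μ_l
    (ρs : ℕ → C(X, ℝ)) (hρsF : ∀ l, ρs l ∈ F)
    (hρsform : ∀ l, ∃ (m : ℕ), 0 < m ∧ ∃ (q : Fin m → Y) (bb : Fin m → ℝ),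
      (∀ i, α (q i) < (bb i : EReal) ∧ (bb i : EReal) < β (q i)) ∧
      ∀ x, ρs l x = ⨅ i, h (bb i) (q i) x)
    (hρssol : ∀ l, ∀ E : Set Y, MeasurableSet E → ω (SVPreimage (T (ρs l)) E) = μs l E)
    -- R₀ in the range of every ρ_l
    (R₀ : ℝ) (hR₀pos : 0 < R₀) (hR₀range : ∀ l, ∃ x, ρs l x = R₀)
    -- (i)
    (hi : ∀ R₁ : ℝ, 0 < R₁ → ∃ C : ℝ, 0 < C ∧ ∀ (y : Y) (t : ℝ),
      α y < (t : EReal) → (t : EReal) < β y → (∃ x, h t y x = R₁) →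
      ∀ x, C⁻¹ ≤ h t y x ∧ h t y x ≤ C)
    -- (ii)
    (hii : ∀ C₀ C₁ : ℝ, 0 < C₀ → C₀ < C₁ →
      IsCompact {f : C(X, ℝ) | f ∈ F ∧ ∀ x, C₀ ≤ f x ∧ f x ≤ C₁}) :
    ∃ ρ : C(X, ℝ), ρ ∈ F ∧ ∀ E : Set Y, MeasurableSet E → ω (SVPreimage (T ρ) E) = μ E := by
  obtain ⟨C, hC0, hC⟩ := hi R₀ hR₀pos
  have hbound : ∀ l, ρs l ∈ {f : C(X, ℝ) | f ∈ F ∧ ∀ x, C⁻¹ ≤ f x ∧ f x ≤ C + C⁻¹} := by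
    intro l
    obtain ⟨m, hm, q, b, hqb, hρ⟩ := hρsform l
    obtain ⟨x₀, hx₀⟩ := hR₀range l
    have : Nonempty (Fin m) := ⟨⟨0, hm⟩⟩
    refine ⟨hρsF l, fun x => ?_⟩
    obtain ⟨hlow, hup⟩ := mem_Icc_of_forall_eq_ciInf (g := fun i x => h (b i) (q i) x) hρ hx₀
      (fun i hi => inv_le_param_apply_of_le hA3b hA3c hA3d hR₀pos hC (hqb i).1 (hqb i).2 hi)
      (fun i hi x => (hC _ _ (hqb i).1 (hqb i).2 ⟨x₀, hi⟩ x).2) x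
    exact ⟨hlow, hup.trans (le_add_of_nonneg_right (inv_pos.2 hC0).le)⟩
  obtain ⟨ρ, ⟨hρF, -⟩, s, hs, hconv⟩ :=
    (hii _ _ (inv_pos.2 hC0) (lt_add_of_pos_left _ hC0)).tendsto_subseq hbound
  have hsel : ∀ f ∈ F, ∃ u : X → Y, (∀ x, u x ∈ T f x) ∧ (∀ᵐ x ∂ω, T f x = {u x}) ∧
      AEMeasurable u ω := fun f hf =>
    let ⟨hne, hcont, hsv, _⟩ := hTCs f hf
    exists_aemeasurable_selection hne hcont hsv
  obtain ⟨u, -, hu, hum⟩ := hsel ρ hρF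
  choose us hus husv hums using fun l => hsel _ (hρsF l)
  have hμs : ∀ l, ω.map (us l) = μs l := fun l => Measure.ext fun E hE => by
    rw [← measure_SVPreimage_eq_map (husv l) (hums l) hE, hρssol l E hE]
  have hlim : ∀ᵐ x ∂ω, Tendsto (fun j => us (s j) x) atTop (𝓝 (u x)) := hu.mono fun x hx =>
    (hTcont ρ hρF).tendsto_of_eq_singleton hx (fun j => hρsF _) hconv fun j => hus _ x
  have hmap : ω.map u = μ := map_eq_of_tendsto_ae (fun j => hums _) hum hlim fun f => by
    simpa only [hμs, Function.comp_def] using (hweak f).comp hs.tendsto_atTop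
  exact ⟨ρ, hρF, fun E hE => by rw [measure_SVPreimage_eq_map hu hum hE, hmap]⟩

/-- Theorem 2.8 (concave case, general target measure, by approximation). -/
theorem stmt4 {X Y : Type*} [MetricSpace X] [CompactSpace X] [MetricSpace Y] [CompactSpace Y]
    [MeasurableSpace X] [BorelSpace X] [MeasurableSpace Y] [BorelSpace Y]
    (ω : Measure X) [IsFiniteMeasure ω]
    (F : Set C(X, ℝ)) (T : C(X, ℝ) → X → Set Y)
    (α β : Y → EReal) (h : ℝ → Y → C(X, ℝ))
    -- F ⊆ C⁺(X)
    (hFpos : ∀ f ∈ F, ∀ x, 0 < f x)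
    -- (A1)
    (hA1 : ∀ f₁ ∈ F, ∀ f₂ ∈ F, f₁ ⊓ f₂ ∈ F)
    -- T maps F into C_s(X,Y)
    (hTCs : ∀ f ∈ F, IsCs ω (T f))
    -- T is continuous at each φ ∈ F
    (hTcont : ∀ φ ∈ F, TContinuousAt F T φ)
    -- (A2)
    (hA2 : ∀ φ₁ ∈ F, ∀ φ₂ ∈ F, ∀ x₀ : X, φ₁ x₀ ≤ φ₂ x₀ → T φ₁ x₀ ⊆ T (φ₁ ⊓ φ₂) x₀)
    -- (A3)
    (hA3mem : ∀ (y : Y) (t : ℝ), α y < (t : EReal) → (t : EReal) < β y → h t y ∈ F)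
    (hA3a : ∀ (y : Y) (t : ℝ), α y < (t : EReal) → (t : EReal) < β y → ∀ x : X, y ∈ T (h t y) x)
    (hA3b : ∀ (y : Y) (t s : ℝ), α y < (t : EReal) → (s : EReal) < β y → t ≤ s →
      ∀ x, h t y x ≤ h s y x)
    (hA3c : ∀ (y : Y), ∀ ε : ℝ, 0 < ε → ∃ t₀ : ℝ, α y < (t₀ : EReal) ∧ (t₀ : EReal) < β y ∧
      ∀ t : ℝ, α y < (t : EReal) → t ≤ t₀ → ∀ x, h t y x < ε)
    (hA3d : ∀ (y : Y) (t : ℝ), α y < (t : EReal) → (t : EReal) < β y →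
      ∀ ε : ℝ, 0 < ε → ∃ δ : ℝ, 0 < δ ∧ ∀ t' : ℝ, α y < (t' : EReal) → (t' : EReal) < β y →
        |t' - t| < δ → ∀ x, |h t' y x - h t y x| ≤ ε)
    -- discrete measures μ_l converging weakly to μ with μ_l(Y) = ω(X)
    (μs : ℕ → Measure Y) (μ : Measure Y) [IsFiniteMeasure μ] [∀ l, IsFiniteMeasure (μs l)]
    (hdiscr : ∀ l, ∃ (m : ℕ) (q : Fin m → Y) (c : Fin m → ENNReal),
      μs l = ∑ i, c i • Measure.dirac (q i))
    (hweak : ∀ fc : C(Y, ℝ),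
      Tendsto (fun l => ∫ y, fc y ∂(μs l)) atTop (nhds (∫ y, fc y ∂μ)))
    (hmassl : ∀ l, μs l Set.univ = ω Set.univ)
    -- solutions ρ_l = min_i h_{bᵢˡ,pᵢˡ} of M_{T(ρ_l)} = μ_l
    (ρs : ℕ → C(X, ℝ)) (hρsF : ∀ l, ρs l ∈ F)
    (hρsform : ∀ l, ∃ (m : ℕ), 0 < m ∧ ∃ (q : Fin m → Y) (bb : Fin m → ℝ),
      (∀ i, α (q i) < (bb i : EReal) ∧ (bb i : EReal) < β (q i)) ∧
      ∀ x, ρs l x = ⨅ i, h (bb i) (q i) x)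
    (hρssol : ∀ l, ∀ E : Set Y, MeasurableSet E → ω (SVPreimage (T (ρs l)) E) = μs l E)
    -- R₀ in the range of every ρ_l
    (R₀ : ℝ) (hR₀pos : 0 < R₀) (hR₀range : ∀ l, ∃ x, ρs l x = R₀)
    -- (i)
    (hi : ∀ R₁ : ℝ, 0 < R₁ → ∃ C : ℝ, 0 < C ∧ ∀ (y : Y) (t : ℝ),
      α y < (t : EReal) → (t : EReal) < β y → (∃ x, h t y x = R₁) →
      ∀ x, C⁻¹ ≤ h t y x ∧ h t y x ≤ C)
    -- (ii)
    (hii : ∀ C₀ C₁ : ℝ, 0 < C₀ → C₀ < C₁ →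
      IsCompact {f : C(X, ℝ) | f ∈ F ∧ ∀ x, C₀ ≤ f x ∧ f x ≤ C₁}) :
    ∃ ρ : C(X, ℝ), ρ ∈ F ∧ ∀ E : Set Y, MeasurableSet E → ω (SVPreimage (T ρ) E) = μ E :=
  stmt4_general ω F T α β h hTCs hTcont hA3b hA3c hA3d μs μ hweak ρs hρsF hρsform hρssol R₀ hR₀pos
    hR₀range hi hii
end

section
/- In the T-convex setting with (A3'), assume additionally that X is connected, that ω(E) > 0 for every nonempty open set E ⊆ X, and that (A3')(b) is strengthened to h_{s,y₀}(x) < h_{t,y₀}(x) for all x whenever t < s. Let ρ = max_{1≤i≤N} h_{bᵢ,pᵢ} and ρ* = max_{1≤i≤N} h_{bᵢ*,pᵢ} both satisfy M_{T(ρ)} = M_{T(ρ*)} = Σᵢ gᵢ δ_{pᵢ} with g₁,…,g_N > 0 and p₁,…,p_N ∈ Y distinct. Then: (a) if b₁* ≤ b₁ then bᵢ* ≤ bᵢ for all 1 ≤ i ≤ N, and if b₁* = b₁ then bᵢ* = bᵢ for all i; (b) if ρ(x₀) = ρ*(x₀) for some x₀ ∈ X then ρ = ρ* on X. -/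
open Filter MeasureTheory Topology

/-! Let `J = {i | bᵢ < bᵢ*}` and suppose some `i₀ ∉ J`. Since `T ρ` is single-valued a.e. and,
by (A2'), contains `pᵢ` at every contact point of `h_{bᵢ,pᵢ}` with `ρ`, the contact points of
the indices in any `s` have measure `∑_{i ∈ s} gᵢ`; likewise for `ρ*`. Strict monotonicity in
`t` puts the closed set `A` of contact points of `ρ*` with indices in `J` inside the open set
`G` of points where `ρ` touches no `h_{bⱼ,pⱼ}` with `j ∉ J`. Hence
`ω(G) ≤ ∑_{i ∈ J} gᵢ = ω(A)`, the open null set `G \ A` is empty, and `G = A` is clopen. If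
`J` were nonempty, `G` would be a nonempty clopen set missing the contact set of `i₀`,
contradicting connectedness. For (b), the index of a contact point of `ρ` at `x₀` has
`bᵢ ≤ bᵢ*`, and symmetrically, so (a) gives `b = b*`. -/

open scoped ENNReal

section

variable {X Y ι : Type*}

lemma SupClosed.mem_of_eq_iSup [TopologicalSpace X] [Fintype ι] [Nonempty ι]
    {F : Set C(X, ℝ)} (hF : SupClosed F) {u : ι → C(X, ℝ)} (hu : ∀ i, u i ∈ F)
    {σ : C(X, ℝ)} (hσ : ∀ x, σ x = ⨆ i, u i x) : σ ∈ F := by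
  have hσ_eq : σ = Finset.univ.sup' Finset.univ_nonempty u := by
    ext x
    rw [hσ, ContinuousMap.sup'_apply, Finset.sup'_univ_eq_ciSup]
  exact hσ_eq ▸ hF.finsetSup'_mem _ fun i _ => hu i

lemma le_of_eq_iSup [Finite ι] {u : ι → X → ℝ} {σ : X → ℝ} (hσ : ∀ x, σ x = ⨆ i, u i x)
    (i : ι) (x : X) : u i x ≤ σ x :=
  hσ x ▸ le_ciSup (Set.finite_range fun j => u j x).bddAbove i

lemma exists_eq_of_eq_iSup [Finite ι] [Nonempty ι] {u : ι → X → ℝ} {σ : X → ℝ}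
    (hσ : ∀ x, σ x = ⨆ i, u i x) (x : X) : ∃ i, u i x = σ x :=
  hσ x ▸ exists_eq_ciSup_of_finite

lemma subset_of_le_of_apply_eq [TopologicalSpace X] {F : Set C(X, ℝ)} {T : C(X, ℝ) → X → Set Y}
    (hT : ∀ φ₁ ∈ F, ∀ φ₂ ∈ F, ∀ x₀ : X, φ₂ x₀ ≤ φ₁ x₀ → T φ₁ x₀ ⊆ T (φ₁ ⊔ φ₂) x₀)
    {φ σ : C(X, ℝ)} (hφ : φ ∈ F) (hσ : σ ∈ F) (hle : φ ≤ σ) {x : X} (hx : φ x = σ x) :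
    T φ x ⊆ T σ x :=
  sup_eq_right.mpr hle ▸ hT φ hφ σ hσ x hx.ge

lemma svPreimage_image_ae_eq_biUnion [MeasurableSpace X] {ω : Measure X}
    {Φ : X → Set Y} (hΦ : ∀ᵐ x ∂ω, ∃ y, Φ x = {y}) {p : ι → Y} (hp : Function.Injective p)
    {C : ι → Set X} (hC : ∀ i, ∀ x ∈ C i, p i ∈ Φ x) (hcover : ∀ x, ∃ i, x ∈ C i) (s : Set ι) :
    SVPreimage Φ (p '' s) =ᵐ[ω] ⋃ i ∈ s, C i := by
  refine Filter.eventuallyEq_set.mpr ?_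
  filter_upwards [hΦ] with x ⟨y, hy⟩
  simp only [Set.mem_iUnion₂]
  constructor
  · rintro ⟨_, hyΦ, j, hj, rfl⟩
    obtain ⟨k, hk⟩ := hcover x
    have hpk := hC k x hk
    rw [hy, Set.mem_singleton_iff] at hyΦ hpk
    exact ⟨j, hj, hp (hpk.trans hyΦ.symm) ▸ hk⟩
  · rintro ⟨i, hi, hx⟩
    exact ⟨p i, hC i x hx, i, hi, rfl⟩

lemma measure_svPreimage_image [MeasurableSpace X] [MeasurableSpace Y]
    [MeasurableSingletonClass Y] [Fintype ι] {ω : Measure X} {Φ : X → Set Y}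
    {p : ι → Y} (hp : Function.Injective p) {m : ι → ℝ≥0∞}
    (hM : ∀ E : Set Y, MeasurableSet E → ω (SVPreimage Φ E) = ∑ i, E.indicator (fun _ => m i) (p i))
    (s : Finset ι) : ω (SVPreimage Φ (p '' s)) = ∑ i ∈ s, m i := by
  classical
  rw [hM _ (s.finite_toSet.image p).measurableSet]
  simp only [Set.indicator_apply, hp.mem_set_image, Finset.mem_coe, Finset.sum_ite_mem,
    Finset.univ_inter]

lemma measure_biUnion_contact [TopologicalSpace X] [MeasurableSpace X] [MeasurableSpace Y]
    [MeasurableSingletonClass Y] [Fintype ι] [Nonempty ι] {ω : Measure X}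
    {F : Set C(X, ℝ)} {T : C(X, ℝ) → X → Set Y}
    (hT : ∀ φ₁ ∈ F, ∀ φ₂ ∈ F, ∀ x₀ : X, φ₂ x₀ ≤ φ₁ x₀ → T φ₁ x₀ ⊆ T (φ₁ ⊔ φ₂) x₀)
    {u : ι → C(X, ℝ)} (hu : ∀ i, u i ∈ F) {σ : C(X, ℝ)} (hσF : σ ∈ F)
    (hσ : ∀ x, σ x = ⨆ i, u i x) (hsingle : ∀ᵐ x ∂ω, ∃ y, T σ x = {y})
    {p : ι → Y} (hp : Function.Injective p) (hpu : ∀ i x, p i ∈ T (u i) x) {m : ι → ℝ≥0∞}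
    (hM : ∀ E : Set Y, MeasurableSet E →
      ω (SVPreimage (T σ) E) = ∑ i, E.indicator (fun _ => m i) (p i))
    (s : Finset ι) : ω (⋃ i ∈ s, {x | u i x = σ x}) = ∑ i ∈ s, m i := by
  have hcontact : ∀ i, ∀ x ∈ {x | u i x = σ x}, p i ∈ T σ x := fun i x hx =>
    subset_of_le_of_apply_eq hT (hu i) hσF (fun x => le_of_eq_iSup hσ i x) hx (hpu i x)
  rw [← measure_svPreimage_image hp hM s]
  exact measure_congr
    (svPreimage_image_ae_eq_biUnion hsingle hp hcontact (exists_eq_of_eq_iSup hσ) s).symm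

lemma IsOpen.eq_of_isClosed_subset [TopologicalSpace X] [MeasurableSpace X]
    [OpensMeasurableSpace X] {ω : Measure X} [ω.IsOpenPosMeasure] {G A : Set X}
    (hG : IsOpen G) (hA : IsClosed A) (hAG : A ⊆ G) (hle : ω G ≤ ω A) (hA_top : ω A ≠ ⊤) :
    G = A := by
  have hnull : ω (G \ A) = 0 := by
    rw [measure_sdiff hAG hA.nullMeasurableSet hA_top, tsub_eq_zero_of_le hle]
  exact (Set.sdiff_eq_empty.mp (((hG.sdiff hA).measure_eq_zero_iff ω).mp hnull)).antisymm hAG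

theorem eq_empty_of_contact_measure [TopologicalSpace X] [ConnectedSpace X] [MeasurableSpace X]
    [OpensMeasurableSpace X] [Fintype ι] {ω : Measure X} [ω.IsOpenPosMeasure]
    {u v : ι → C(X, ℝ)} {ρ ρs : C(X, ℝ)} (hρ : ∀ x, ρ x = ⨆ i, u i x)
    (hρs : ∀ x, ρs x = ⨆ i, v i x) {m : ι → ℝ≥0∞} (hm : ∀ i, m i ≠ 0) (hm_top : ∀ i, m i ≠ ⊤)
    (hu : ∀ s : Finset ι, ω (⋃ i ∈ s, {x | u i x = ρ x}) = ∑ i ∈ s, m i)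
    (hv : ∀ s : Finset ι, ω (⋃ i ∈ s, {x | v i x = ρs x}) = ∑ i ∈ s, m i)
    {J : Finset ι} (hJ : ∀ i ∈ J, ∀ x, v i x < u i x) (hJc : ∀ i ∉ J, ∀ x, u i x ≤ v i x)
    {i₀ : ι} (hi₀ : i₀ ∉ J) : J = ∅ := by
  classical
  have : Nonempty ι := ⟨i₀⟩
  by_contra hJ_ne
  obtain ⟨i₁, hi₁⟩ := Finset.nonempty_iff_ne_empty.mpr hJ_ne
  set A := ⋃ i ∈ J, {x | v i x = ρs x}
  set G := (⋃ i ∈ Jᶜ, {x | u i x = ρ x})ᶜ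
  have hA : IsClosed A := isClosed_biUnion_finset fun i _ => isClosed_eq (by fun_prop) (by fun_prop)
  have hG : IsOpen G := (isClosed_biUnion_finset fun i _ =>
    isClosed_eq (by fun_prop) (by fun_prop)).isOpen_compl
  have hAG : A ⊆ G := by
    simp only [A, G, Set.subset_def, Set.mem_iUnion₂, Set.mem_compl_iff, Set.mem_ofPred_eq,
      Finset.mem_compl, not_exists]
    rintro x ⟨i, hi, hix⟩ j hj hjx
    have := calc ρ x = u j x := hjx.symm
      _ ≤ v j x := hJc j hj x
      _ ≤ ρs x := le_of_eq_iSup hρs j x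
      _ = v i x := hix.symm
      _ < u i x := hJ i hi x
      _ ≤ ρ x := le_of_eq_iSup hρ i x
    exact this.false
  have hG_sub : G ⊆ ⋃ i ∈ J, {x | u i x = ρ x} := by
    intro x hx
    obtain ⟨k, hk⟩ := exists_eq_of_eq_iSup hρ x
    by_cases hkJ : k ∈ J
    · exact Set.mem_biUnion hkJ hk
    · exact absurd (Set.mem_biUnion (Finset.mem_compl.mpr hkJ) hk) hx
  have hωA : ω A = ∑ i ∈ J, m i := hv J
  have hGA : G = A := hG.eq_of_isClosed_subset hA hAG
    ((measure_mono hG_sub).trans_eq ((hu J).trans hωA.symm))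
    (hωA ▸ ENNReal.sum_ne_top.mpr fun i _ => hm_top i)
  have hA_ne : A.Nonempty := nonempty_of_measure_ne_zero <| by
    rw [hωA, Ne, Finset.sum_eq_zero_iff]
    exact fun h0 => hm i₁ (h0 i₁ hi₁)
  have hG_univ : G = Set.univ := IsClopen.eq_univ ⟨hGA ▸ hA, hG⟩ (hGA ▸ hA_ne)
  obtain ⟨x, hx⟩ : {x | u i₀ x = ρ x}.Nonempty :=
    nonempty_of_measure_ne_zero (μ := ω) (by simpa using (hu {i₀}).trans_ne (by simpa using hm i₀))
  exact (hG_univ ▸ Set.mem_univ x : x ∈ G) (Set.mem_biUnion (Finset.mem_compl.mpr hi₀) hx)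

section Parameters

variable [TopologicalSpace X] {H : ι → ℝ → C(X, ℝ)} {S : ι → Set ℝ}
  {b bs : ι → ℝ} {ρ ρs : C(X, ℝ)}

theorem forall_le_of_exists_le [ConnectedSpace X] [MeasurableSpace X] [OpensMeasurableSpace X]
    [Fintype ι] {ω : Measure X} [ω.IsOpenPosMeasure]
    (hH : ∀ i x, StrictAntiOn (fun t => H i t x) (S i))
    (hb : ∀ i, b i ∈ S i) (hbs : ∀ i, bs i ∈ S i)
    (hρ : ∀ x, ρ x = ⨆ i, H i (b i) x) (hρs : ∀ x, ρs x = ⨆ i, H i (bs i) x)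
    {m : ι → ℝ≥0∞} (hm : ∀ i, m i ≠ 0) (hm_top : ∀ i, m i ≠ ⊤)
    (hu : ∀ s : Finset ι, ω (⋃ i ∈ s, {x | H i (b i) x = ρ x}) = ∑ i ∈ s, m i)
    (hv : ∀ s : Finset ι, ω (⋃ i ∈ s, {x | H i (bs i) x = ρs x}) = ∑ i ∈ s, m i)
    (h₀ : ∃ i₀, bs i₀ ≤ b i₀) (i : ι) : bs i ≤ b i := by
  classical
  obtain ⟨i₀, h₀⟩ := h₀
  have hJ : Finset.univ.filter (fun i => b i < bs i) = ∅ :=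
    eq_empty_of_contact_measure hρ hρs hm hm_top hu hv
      (fun i hi x => hH i x (hb i) (hbs i) (Finset.mem_filter.mp hi).2)
      (fun i hi x => (hH i x).antitoneOn (hbs i) (hb i) (by simpa using hi))
      (by simpa using h₀)
  simpa using Finset.filter_eq_empty_iff.mp hJ (Finset.mem_univ i)

theorem exists_le_of_apply_eq [Finite ι] [Nonempty ι]
    (hH : ∀ i x, StrictAntiOn (fun t => H i t x) (S i))
    (hb : ∀ i, b i ∈ S i) (hbs : ∀ i, bs i ∈ S i)
    (hρ : ∀ x, ρ x = ⨆ i, H i (b i) x) (hρs : ∀ x, ρs x = ⨆ i, H i (bs i) x)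
    {x₀ : X} (hx₀ : ρ x₀ = ρs x₀) : ∃ i, b i ≤ bs i := by
  obtain ⟨i, hi⟩ := exists_eq_of_eq_iSup hρ x₀
  refine ⟨i, not_lt.mp fun hlt => ?_⟩
  have := calc ρ x₀ = H i (b i) x₀ := hi.symm
    _ < H i (bs i) x₀ := hH i x₀ (hbs i) (hb i) hlt
    _ ≤ ρs x₀ := le_of_eq_iSup hρs i x₀
    _ = ρ x₀ := hx₀.symm
  exact this.false

end Parameters

end

theorem stmt6_general {X Y : Type*} [MetricSpace X] [MetricSpace Y]
    [MeasurableSpace X] [BorelSpace X] [MeasurableSpace Y] [BorelSpace Y]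
    (ω : Measure X)
    -- X is connected and ω is positive on nonempty open sets
    [ConnectedSpace X]
    (hωpos : ∀ U : Set X, IsOpen U → U.Nonempty → 0 < ω U)
    (F : Set C(X, ℝ)) (T : C(X, ℝ) → X → Set Y)
    (α β : Y → EReal) (h : ℝ → Y → C(X, ℝ))
    -- (A1')
    (hA1 : ∀ f₁ ∈ F, ∀ f₂ ∈ F, f₁ ⊔ f₂ ∈ F)
    -- T maps F into C_s(X,Y)
    (hTCs : ∀ f ∈ F, IsCs ω (T f))
    -- (A2')
    (hA2 : ∀ φ₁ ∈ F, ∀ φ₂ ∈ F, ∀ x₀ : X, φ₂ x₀ ≤ φ₁ x₀ → T φ₁ x₀ ⊆ T (φ₁ ⊔ φ₂) x₀)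
    -- (A3') with (b) strengthened to strict monotonicity
    (hA3mem : ∀ (y : Y) (t : ℝ), α y < (t : EReal) → (t : EReal) < β y → h t y ∈ F)
    (hA3a : ∀ (y : Y) (t : ℝ), α y < (t : EReal) → (t : EReal) < β y → ∀ x : X, y ∈ T (h t y) x)
    (hA3b : ∀ (y : Y) (t s : ℝ), α y < (t : EReal) → (s : EReal) < β y → t < s →
      ∀ x, h s y x < h t y x)
    -- the data
    {N : ℕ} [NeZero N]
    (p : Fin N → Y) (hp : Function.Injective p)
    (g : Fin N → ℝ) (hg : ∀ i, 0 < g i)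
    -- two solutions ρ = max h_{bᵢ,pᵢ} and ρ* = max h_{bᵢ*,pᵢ} as in Theorem 2.9
    (b bs : Fin N → ℝ)
    (hb : ∀ i, α (p i) < (b i : EReal) ∧ (b i : EReal) < β (p i))
    (hbs : ∀ i, α (p i) < (bs i : EReal) ∧ (bs i : EReal) < β (p i))
    (ρ ρs : C(X, ℝ))
    (hρ : ∀ x, ρ x = ⨆ i, h (b i) (p i) x)
    (hρs : ∀ x, ρs x = ⨆ i, h (bs i) (p i) x)
    (hMρ : ∀ E : Set Y, MeasurableSet E →
      ω (SVPreimage (T ρ) E) = ∑ i, E.indicator (fun _ => ENNReal.ofReal (g i)) (p i))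
    (hMρs : ∀ E : Set Y, MeasurableSet E →
      ω (SVPreimage (T ρs) E) = ∑ i, E.indicator (fun _ => ENNReal.ofReal (g i)) (p i)) :
    -- (a)
    ((bs 0 ≤ b 0 → ∀ i, bs i ≤ b i) ∧ (bs 0 = b 0 → ∀ i, bs i = b i)) ∧
    -- (b)
    ((∃ x₀ : X, ρ x₀ = ρs x₀) → ∀ x : X, ρ x = ρs x) := by
  have : ω.IsOpenPosMeasure := ⟨fun U hU hne => (hωpos U hU hne).ne'⟩
  let S : Fin N → Set ℝ := fun i => {t | α (p i) < t ∧ (t : EReal) < β (p i)}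
  have hH : ∀ i x, StrictAntiOn (fun t => h t (p i) x) (S i) :=
    fun i x t ht s hs hts => hA3b _ _ _ ht.1 hs.2 hts x
  have hmem : ∀ c : Fin N → ℝ, (∀ i, c i ∈ S i) → ∀ i, h (c i) (p i) ∈ F :=
    fun c hc i => hA3mem _ _ (hc i).1 (hc i).2
  have hpmem : ∀ c : Fin N → ℝ, (∀ i, c i ∈ S i) → ∀ i x, p i ∈ T (h (c i) (p i)) x :=
    fun c hc i => hA3a _ _ (hc i).1 (hc i).2
  have hρF : ρ ∈ F := SupClosed.mem_of_eq_iSup hA1 (hmem b hb) hρ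
  have hρsF : ρs ∈ F := SupClosed.mem_of_eq_iSup hA1 (hmem bs hbs) hρs
  have hu := measure_biUnion_contact hA2 (hmem b hb) hρF hρ (hTCs ρ hρF).2.2.1 hp
    (hpmem b hb) hMρ
  have hv := measure_biUnion_contact hA2 (hmem bs hbs) hρsF hρs (hTCs ρs hρsF).2.2.1 hp
    (hpmem bs hbs) hMρs
  have hm : ∀ i, ENNReal.ofReal (g i) ≠ 0 := fun i => (ENNReal.ofReal_pos.mpr (hg i)).ne'
  have hle := forall_le_of_exists_le hH hb hbs hρ hρs hm (fun _ => ENNReal.ofReal_ne_top) hu hv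
  have hge := forall_le_of_exists_le hH hbs hb hρs hρ hm (fun _ => ENNReal.ofReal_ne_top) hv hu
  refine ⟨⟨fun h₀ => hle ⟨0, h₀⟩, fun h₀ i => (hle ⟨0, h₀.le⟩ i).antisymm (hge ⟨0, h₀.ge⟩ i)⟩,
    fun ⟨x₀, hx₀⟩ x => ?_⟩
  have hb_eq : b = bs := funext fun k =>
    (hge (exists_le_of_apply_eq hH hb hbs hρ hρs hx₀) k).antisymm
      (hle (exists_le_of_apply_eq hH hbs hb hρs hρ hx₀.symm) k)
  rw [hρ, hρs, hb_eq]

/-- Theorem 2.10 (comparison/uniqueness, convex case). -/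
theorem stmt6 {X Y : Type*} [MetricSpace X] [CompactSpace X] [MetricSpace Y] [CompactSpace Y]
    [MeasurableSpace X] [BorelSpace X] [MeasurableSpace Y] [BorelSpace Y]
    (ω : Measure X) [IsFiniteMeasure ω]
    -- X is connected and ω is positive on nonempty open sets
    [ConnectedSpace X]
    (hωpos : ∀ U : Set X, IsOpen U → U.Nonempty → 0 < ω U)
    (F : Set C(X, ℝ)) (T : C(X, ℝ) → X → Set Y)
    (α β : Y → EReal) (h : ℝ → Y → C(X, ℝ))
    -- F ⊆ C⁺(X)
    (hFpos : ∀ f ∈ F, ∀ x, 0 < f x)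
    -- (A1')
    (hA1 : ∀ f₁ ∈ F, ∀ f₂ ∈ F, f₁ ⊔ f₂ ∈ F)
    -- T maps F into C_s(X,Y)
    (hTCs : ∀ f ∈ F, IsCs ω (T f))
    -- T is continuous at each φ ∈ F
    (hTcont : ∀ φ ∈ F, TContinuousAt F T φ)
    -- (A2')
    (hA2 : ∀ φ₁ ∈ F, ∀ φ₂ ∈ F, ∀ x₀ : X, φ₂ x₀ ≤ φ₁ x₀ → T φ₁ x₀ ⊆ T (φ₁ ⊔ φ₂) x₀)
    -- (A3') with (b) strengthened to strict monotonicity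
    (hA3mem : ∀ (y : Y) (t : ℝ), α y < (t : EReal) → (t : EReal) < β y → h t y ∈ F)
    (hA3a : ∀ (y : Y) (t : ℝ), α y < (t : EReal) → (t : EReal) < β y → ∀ x : X, y ∈ T (h t y) x)
    (hA3b : ∀ (y : Y) (t s : ℝ), α y < (t : EReal) → (s : EReal) < β y → t < s →
      ∀ x, h s y x < h t y x)
    (hA3c : ∀ (y : Y), ∀ ε : ℝ, 0 < ε → ∃ t₀ : ℝ, α y < (t₀ : EReal) ∧ (t₀ : EReal) < β y ∧
      ∀ t : ℝ, t₀ ≤ t → (t : EReal) < β y → ∀ x, h t y x < ε)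
    (hA3d : ∀ (y : Y) (t : ℝ), α y < (t : EReal) → (t : EReal) < β y →
      ∀ ε : ℝ, 0 < ε → ∃ δ : ℝ, 0 < δ ∧ ∀ t' : ℝ, α y < (t' : EReal) → (t' : EReal) < β y →
        |t' - t| < δ → ∀ x, |h t' y x - h t y x| ≤ ε)
    -- the data
    {N : ℕ} [NeZero N] (hN : 2 ≤ N)
    (p : Fin N → Y) (hp : Function.Injective p)
    (g : Fin N → ℝ) (hg : ∀ i, 0 < g i)
    -- two solutions ρ = max h_{bᵢ,pᵢ} and ρ* = max h_{bᵢ*,pᵢ} as in Theorem 2.9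
    (b bs : Fin N → ℝ)
    (hb : ∀ i, α (p i) < (b i : EReal) ∧ (b i : EReal) < β (p i))
    (hbs : ∀ i, α (p i) < (bs i : EReal) ∧ (bs i : EReal) < β (p i))
    (ρ ρs : C(X, ℝ))
    (hρ : ∀ x, ρ x = ⨆ i, h (b i) (p i) x)
    (hρs : ∀ x, ρs x = ⨆ i, h (bs i) (p i) x)
    (hMρ : ∀ E : Set Y, MeasurableSet E →
      ω (SVPreimage (T ρ) E) = ∑ i, E.indicator (fun _ => ENNReal.ofReal (g i)) (p i))
    (hMρs : ∀ E : Set Y, MeasurableSet E →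
      ω (SVPreimage (T ρs) E) = ∑ i, E.indicator (fun _ => ENNReal.ofReal (g i)) (p i)) :
    -- (a)
    ((bs 0 ≤ b 0 → ∀ i, bs i ≤ b i) ∧ (bs 0 = b 0 → ∀ i, bs i = b i)) ∧
    -- (b)
    ((∃ x₀ : X, ρ x₀ = ρs x₀) → ∀ x : X, ρ x = ρs x) :=
  stmt6_general ω hωpos F T α β h hA1 hTCs hA2 hA3mem hA3a hA3b p hp g hg b bs hb hbs ρ ρs hρ hρs
    hMρ hMρs
end
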